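/- arXiv:2302.08792 — 6 statements merged into one kernel-verified Lean document; each statement's English description precedes it below -/
import Mathlib

section
/- Let p be a prime, R a commutative ring equipped with a p-derivation δ with associated Frobenius lift φ, and m ≥ 0 an integer. Then there exists a ring homomorphism t̃F : 𝕎(R) → 𝕎(R) of the ring of p-typical Witt vectors such that: (i) w_k(t̃F(x)) = φ(w_k(x)) for all 0 ≤ k ≤ m and all x ∈ 𝕎(R); (ii) w_k(t̃F(x)) = w_{k+1}(x) for all k ≥ m+1 and all x ∈ 𝕎(R); and (iii) for every h ≥ 0 and every x ∈ 𝕎(R), the h-th Witt coefficient of t̃F(x) is congruent to the p-th power of the h-th Witt coefficient of x modulo p, i.e. (t̃F(x))_h − (x_h)^p ∈ pR. -/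
/-!
Over a `p`-torsion-free ring with a Frobenius lift `Φ`, Dwork's lemma says that a sequence `g`
is the ghost sequence of a Witt vector as soon as `g (n + 1) ≡ Φ (g n) mod p ^ (n + 1)`. The
sequence `(Φ w₀, …, Φ wₘ, w_{m+2}, w_{m+3}, …)` built from the ghost components of a Witt vector
satisfies these congruences, and since the ghost map is injective there, the resulting map is a
ring endomorphism.

Applied to the free `δ`-ring on the Witt coefficients, this gives universal polynomials in the
iterated `δ`-derivatives of the coefficients; evaluating them defines the map over any ring with a
`p`-derivation. It commutes with maps of rings with `p`-derivation, and every such ring is a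
quotient of a free one, which is `p`-torsion-free; so it is a ring endomorphism everywhere. The
congruence of the coefficients modulo `p` is read off from congruences of the ghost components
modulo `p ^ (k + 1)`.
-/

open MvPolynomial WittVector Finset

/-- A `p`-derivation on a commutative ring `B`, relative to the polynomial
`Cp ∈ ℤ[X,Y]` satisfying `p·Cp = X^p + Y^p - (X+Y)^p`. -/
def IsPDeriv (p : ℕ) {B : Type*} [CommRing B] (Cp : MvPolynomial (Fin 2) ℤ)
    (δ : B → B) : Prop :=
  δ 1 = 0 ∧
  (∀ x y : B, δ (x + y) = δ x + δ y + MvPolynomial.aeval ![x, y] Cp) ∧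
  (∀ x y : B, δ (x * y) = x ^ p * δ y + y ^ p * δ x + (p : B) * δ x * δ y)

lemma MvPolynomial.mem_closure_range_X {σ : Type*} (b : MvPolynomial σ ℤ) :
    b ∈ Subring.closure (Set.range X) := by
  induction b using MvPolynomial.induction_on with
  | C a => simpa only [eq_intCast] using intCast_mem _ a
  | add p q hp hq => exact add_mem hp hq
  | mul_X p n hp => exact mul_mem hp (Subring.subset_closure ⟨n, rfl⟩)

lemma MvPolynomial.map_aeval_pair {R S : Type*} [CommRing R] [CommRing S] (f : R →+* S)
    (Q : MvPolynomial (Fin 2) ℤ) (x y : R) : f (aeval ![x, y] Q) = aeval ![f x, f y] Q := by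
  rw [map_aeval, RingHom.ext_int (f.comp (algebraMap ℤ R)) (algebraMap ℤ S), aeval_eq_eval₂Hom]
  congr
  ext i
  fin_cases i <;> rfl

namespace IsPDeriv

variable {p : ℕ} {R : Type*} [CommRing R] {Cp : MvPolynomial (Fin 2) ℤ}
  (hCp : (p : MvPolynomial (Fin 2) ℤ) * Cp = X 0 ^ p + X 1 ^ p - (X 0 + X 1) ^ p)
  {δ : R → R} (hδ : IsPDeriv p Cp δ)

include hCp

lemma natCast_mul_aeval (x y : R) :
    (p : R) * aeval ![x, y] Cp = x ^ p + y ^ p - (x + y) ^ p := by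
  simpa using congrArg (aeval ![x, y]) hCp

include hδ

noncomputable def frobeniusLift : R →+* R :=
  RingHom.mk'
    { toFun x := x ^ p + (p : R) * δ x
      map_one' := by simp [hδ.1]
      map_mul' x y := by linear_combination (p : R) * hδ.2.2 x y }
    fun x y => show (x + y) ^ p + (p : R) * δ (x + y) = x ^ p + p * δ x + (y ^ p + p * δ y) by
      linear_combination (p : R) * hδ.2.1 x y + natCast_mul_aeval hCp x y

lemma frobeniusLift_apply (x : R) : hδ.frobeniusLift hCp x = x ^ p + (p : R) * δ x := rfl

variable [Fact p.Prime]

lemma apply_zero : δ 0 = 0 := by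
  have hC : MvPolynomial.constantCoeff Cp = 0 := by
    have h := congrArg MvPolynomial.constantCoeff hCp
    simp only [_root_.map_mul, map_natCast, map_sub, map_add, map_pow, constantCoeff_X, add_zero,
      zero_pow (Fact.out : p.Prime).ne_zero, sub_zero] at h
    exact (mul_eq_zero.1 h).resolve_left (by exact_mod_cast (Fact.out : p.Prime).ne_zero)
  have h := hδ.2.1 0 0
  rw [add_zero, show (![0, 0] : Fin 2 → R) = 0 from by ext i; fin_cases i <;> rfl,
    aeval_zero, hC, _root_.map_zero] at h
  linear_combination -h

lemma apply_neg (x : R) : δ (-x) = -δ x - aeval ![x, -x] Cp := by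
  have h := hδ.2.1 x (-x)
  rw [add_neg_cancel, hδ.apply_zero hCp] at h
  linear_combination -h

/-- The set where `f ∘ δS` and `δ ∘ f` agree is a subring: both `p`-derivations obey the same
addition and multiplication rules. -/
lemma map_comp_of_mem_closure {S : Type*} [CommRing S] {δS : S → S} (hδS : IsPDeriv p Cp δS)
    (f : S →+* R) {s : Set S} (hs : ∀ x ∈ s, f (δS x) = δ (f x)) {x : S}
    (hx : x ∈ Subring.closure s) : f (δS x) = δ (f x) := by
  induction hx using Subring.closure_induction with
  | mem x hx => exact hs x hx
  | zero => simp only [hδS.apply_zero hCp, hδ.apply_zero hCp, _root_.map_zero]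
  | one => simp only [hδS.1, hδ.1, _root_.map_zero, _root_.map_one]
  | add x y _ _ hx hy =>
    simp only [hδS.2.1, hδ.2.1, _root_.map_add, hx, hy, map_aeval_pair]
  | neg x _ hx =>
    simp only [hδS.apply_neg hCp, hδ.apply_neg hCp, _root_.map_neg, map_sub, hx, map_aeval_pair]
  | mul x y _ _ hx hy =>
    simp only [hδS.2.2, hδ.2.2, _root_.map_add, _root_.map_mul, map_pow, map_natCast, hx, hy]

end IsPDeriv

namespace WittVector

variable {p : ℕ} [Fact p.Prime] {B : Type*} [CommRing B]

local notation "𝕎" => WittVector p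

lemma ghostComponent_eq_sum (n : ℕ) (x : 𝕎 B) :
    ghostComponent n x = ∑ i ∈ range (n + 1), (p : B) ^ i * x.coeff i ^ p ^ (n - i) := by
  rw [ghostComponent_apply, aeval_wittPolynomial]

lemma ghostComponent_map {S : Type*} [CommRing S] (f : B →+* S) (n : ℕ) (x : 𝕎 B) :
    ghostComponent n (map f x) = f (ghostComponent n x) := by
  simp [ghostComponent_eq_sum, map_sum]

lemma ghostComponent_congr {x y : 𝕎 B} {n : ℕ} (h : ∀ i ≤ n, x.coeff i = y.coeff i) :
    ghostComponent n x = ghostComponent n y := by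
  simp_rw [ghostComponent_eq_sum]
  exact sum_congr rfl fun i hi => by rw [h i (Nat.lt_succ_iff.1 (mem_range.1 hi))]

lemma ghostComponent_succ (n : ℕ) (x : 𝕎 B) :
    ghostComponent (n + 1) x =
      ghostComponent n (mk p fun i => x.coeff i ^ p) + (p : B) ^ (n + 1) * x.coeff (n + 1) := by
  rw [ghostComponent_eq_sum, ghostComponent_eq_sum, sum_range_succ, Nat.sub_self, pow_zero,
    pow_one]
  congr 1
  refine sum_congr rfl fun i hi => ?_
  rw [coeff_mk, ← pow_mul, ← pow_succ', Nat.sub_add_comm (Nat.lt_succ_iff.1 (mem_range.1 hi))]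

lemma pow_dvd_ghostComponent_sub_sub {x y : 𝕎 B} {n : ℕ}
    (h : ∀ i < n, (p : B) ∣ x.coeff i - y.coeff i) :
    (p : B) ^ (n + 1) ∣
      ghostComponent n x - ghostComponent n y - (p : B) ^ n * (x.coeff n - y.coeff n) := by
  convert_to (p : B) ^ (n + 1) ∣ ∑ i ∈ range n,
      ((p : B) ^ i * x.coeff i ^ p ^ (n - i) - (p : B) ^ i * y.coeff i ^ p ^ (n - i)) using 1
  · rw [ghostComponent_eq_sum, ghostComponent_eq_sum, sum_range_succ, sum_range_succ,
      sum_sub_distrib, Nat.sub_self, pow_zero, pow_one, pow_one]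
    ring
  refine dvd_sum fun i hi => ?_
  have hi := mem_range.1 hi
  rw [← mul_sub, show n + 1 = i + (n - i + 1) by omega, pow_add]
  exact mul_dvd_mul_left _ (by exact_mod_cast dvd_sub_pow_of_dvd_sub (h i hi) (n - i))

lemma pow_dvd_ghostComponent_sub {x y : 𝕎 B} {n : ℕ}
    (h : ∀ i ≤ n, (p : B) ∣ x.coeff i - y.coeff i) :
    (p : B) ^ (n + 1) ∣ ghostComponent n x - ghostComponent n y := by
  have hn : (p : B) ^ (n + 1) ∣ (p : B) ^ n * (x.coeff n - y.coeff n) := by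
    rw [pow_succ]
    exact mul_dvd_mul_left _ (h n le_rfl)
  simpa using dvd_add (pow_dvd_ghostComponent_sub_sub fun i hi => h i hi.le) hn

section Regular

variable (hreg : IsLeftRegular (p : B))
include hreg

lemma dvd_coeff_sub_of_pow_dvd_ghostComponent_sub {x y : 𝕎 B} {n : ℕ}
    (h : ∀ k ≤ n, (p : B) ^ (k + 1) ∣ ghostComponent k x - ghostComponent k y) :
    (p : B) ∣ x.coeff n - y.coeff n := by
  induction n using Nat.strong_induction_on with
  | _ n ih =>
    have hlow := pow_dvd_ghostComponent_sub_sub fun i hi =>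
      ih i hi fun k hk => h k (by omega)
    obtain ⟨c, hc⟩ := (dvd_sub_right (h n le_rfl)).1 hlow
    exact ⟨c, hreg.pow n (by simp only [hc, pow_succ, mul_assoc])⟩

lemma coeff_eq_of_ghostComponent_eq {x y : 𝕎 B} {n : ℕ}
    (h : ∀ k ≤ n, ghostComponent k x = ghostComponent k y) : x.coeff n = y.coeff n := by
  induction n using Nat.strong_induction_on with
  | _ n ih =>
    have hn := h n le_rfl
    rw [ghostComponent_eq_sum, ghostComponent_eq_sum, sum_range_succ, sum_range_succ,
      sum_congr rfl fun i hi => by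
        rw [ih i (mem_range.1 hi) fun k hk => h k (by have := mem_range.1 hi; omega)],
      add_right_inj, Nat.sub_self, pow_zero, pow_one, pow_one] at hn
    exact hreg.pow n hn

lemma ghostMap_injective : Function.Injective (ghostMap : 𝕎 B → ℕ → B) :=
  fun _ _ h => ext fun _ => coeff_eq_of_ghostComponent_eq hreg fun k _ => congrFun h k

end Regular

section FrobeniusLift

variable {Φ : B →+* B} (hΦ : ∀ b, (p : B) ∣ Φ b - b ^ p)
include hΦ

lemma pow_dvd_ghostComponent_succ_sub (x : 𝕎 B) (n : ℕ) :
    (p : B) ^ (n + 1) ∣ ghostComponent (n + 1) x - Φ (ghostComponent n x) := by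
  have h := pow_dvd_ghostComponent_sub (n := n) (x := mk p fun i => x.coeff i ^ p)
    (y := map Φ x) fun i _ => dvd_sub_comm.1 (hΦ _)
  rw [ghostComponent_succ, ← ghostComponent_map]
  convert dvd_add h (dvd_mul_right _ (x.coeff (n + 1))) using 1
  ring

lemma exists_ghostComponent_eq_of_le {g : ℕ → B}
    (hg : ∀ n, (p : B) ^ (n + 1) ∣ g (n + 1) - Φ (g n)) (n : ℕ) :
    ∃ x : 𝕎 B, ∀ k ≤ n, ghostComponent k x = g k := by
  induction n with
  | zero =>
    exact ⟨mk p fun _ => g 0, fun k hk => by simp [Nat.le_zero.1 hk, ghostComponent_eq_sum]⟩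
  | succ n ih =>
    obtain ⟨x, hx⟩ := ih
    obtain ⟨c, hc⟩ : (p : B) ^ (n + 1) ∣ g (n + 1) - ghostComponent (n + 1) x := by
      have h := dvd_sub (hg n) (pow_dvd_ghostComponent_succ_sub hΦ x n)
      rwa [hx n le_rfl, sub_sub_sub_cancel_right] at h
    let y := mk p (Function.update x.coeff (n + 1) (x.coeff (n + 1) + c))
    have hlow : ∀ i ≤ n, y.coeff i = x.coeff i := fun i hi =>
      Function.update_of_ne (by omega) _ _
    refine ⟨y, fun k hk => ?_⟩
    rcases hk.lt_or_eq with hk | rfl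
    · rw [ghostComponent_congr fun i hi => hlow i (by omega), hx k (by omega)]
    · have hpow : ghostComponent n (mk p fun i => y.coeff i ^ p) =
          ghostComponent n (mk p fun i => x.coeff i ^ p) :=
        ghostComponent_congr fun i hi => by simp only [coeff_mk, hlow i hi]
      rw [ghostComponent_succ] at hc
      rw [ghostComponent_succ, hpow, show y.coeff (n + 1) = x.coeff (n + 1) + c from
        Function.update_self ..]
      linear_combination -hc

/-- Dwork's lemma. -/
theorem exists_ghostComponent_eq (hreg : IsLeftRegular (p : B)) {g : ℕ → B}
    (hg : ∀ n, (p : B) ^ (n + 1) ∣ g (n + 1) - Φ (g n)) :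
    ∃ x : 𝕎 B, ∀ n, ghostComponent n x = g n := by
  choose y hy using exists_ghostComponent_eq_of_le hΦ hg
  refine ⟨mk p fun n => (y n).coeff n, fun n => ?_⟩
  rw [← hy n n le_rfl]
  refine ghostComponent_congr fun i hi =>
    coeff_eq_of_ghostComponent_eq (x := y i) hreg fun k hk => ?_
  rw [hy i k hk, hy n k (hk.trans hi)]

end FrobeniusLift

section ShiftedGhost

variable (Φ : B →+* B) (m : ℕ)

def shiftedGhost : (ℕ → B) →+* (ℕ → B) :=
  RingHom.pi fun k => if k ≤ m then Φ.comp (Pi.evalRingHom _ k) else Pi.evalRingHom _ (k + 1)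

variable {Φ m}

lemma shiftedGhost_apply (g : ℕ → B) (k : ℕ) :
    shiftedGhost Φ m g k = if k ≤ m then Φ (g k) else g (k + 1) := by
  rw [shiftedGhost, RingHom.pi_apply]
  split_ifs <;> rfl

variable (hΦ : ∀ b, (p : B) ∣ Φ b - b ^ p)
include hΦ

lemma pow_dvd_shiftedGhost_succ_sub (x : 𝕎 B) (k : ℕ) :
    (p : B) ^ (k + 1) ∣
      shiftedGhost Φ m (ghostMap x) (k + 1) - Φ (shiftedGhost Φ m (ghostMap x) k) := by
  have hD := pow_dvd_ghostComponent_succ_sub hΦ x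
  have hΦD : ∀ n, (p : B) ^ (n + 1) ∣
      Φ (ghostComponent (n + 1) x) - Φ (Φ (ghostComponent n x)) := fun n => by
    simpa using map_dvd Φ (hD n)
  simp only [shiftedGhost_apply, ghostMap_apply]
  split_ifs with h₁ h₂
  · exact hΦD k
  · omega
  · convert dvd_add ((pow_dvd_pow _ (Nat.le_succ _)).trans (hD (k + 1))) (hΦD k) using 1
    ring
  · exact (pow_dvd_pow _ (Nat.le_succ _)).trans (hD (k + 1))

lemma pow_dvd_shiftedGhost_sub (x : 𝕎 B) (k : ℕ) :
    (p : B) ^ (k + 1) ∣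
      shiftedGhost Φ m (ghostMap x) k - ghostComponent k (mk p fun i => x.coeff i ^ p) := by
  rw [shiftedGhost_apply, ghostMap_apply]
  split_ifs
  · rw [← ghostComponent_map]
    exact pow_dvd_ghostComponent_sub fun i _ => hΦ (x.coeff i)
  · rw [ghostMap_apply, ghostComponent_succ, add_sub_cancel_left]
    exact dvd_mul_right _ _

lemma exists_ghostMap_eq_shiftedGhost (hreg : IsLeftRegular (p : B)) (x : 𝕎 B) :
    ∃ y : 𝕎 B, ghostMap y = shiftedGhost Φ m (ghostMap x) ∧
      ∀ n, (p : B) ∣ y.coeff n - x.coeff n ^ p := by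
  obtain ⟨y, hy⟩ := exists_ghostComponent_eq hΦ hreg (pow_dvd_shiftedGhost_succ_sub hΦ x)
  refine ⟨y, funext hy, fun n => ?_⟩
  refine dvd_coeff_sub_of_pow_dvd_ghostComponent_sub (y := mk p fun i => x.coeff i ^ p) hreg
    fun k _ => ?_
  rw [hy]
  exact pow_dvd_shiftedGhost_sub hΦ x k

end ShiftedGhost

end WittVector

/-- `X (i, j)` stands for `δ^[j]` applied to the `i`-th generator. -/
abbrev FreeDeltaRing (ι : Type*) : Type _ := MvPolynomial (ι × ℕ) ℤ

namespace FreeDeltaRing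

variable (p : ℕ) {ι : Type*} {R : Type*} [CommRing R]

noncomputable def frobeniusLift : FreeDeltaRing ι →+* FreeDeltaRing ι :=
  (aeval fun v : ι × ℕ => X v ^ p + (p : FreeDeltaRing ι) * X (v.1, v.2 + 1)).toRingHom

lemma frobeniusLift_X (v : ι × ℕ) :
    frobeniusLift p (X v) = X v ^ p + (p : FreeDeltaRing ι) * X (v.1, v.2 + 1) :=
  aeval_X _ _

noncomputable def deltaEval (δ : R → R) (c : ι → R) : FreeDeltaRing ι →+* R :=
  (aeval fun v : ι × ℕ => δ^[v.2] (c v.1)).toRingHom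

lemma deltaEval_X (δ : R → R) (c : ι → R) (v : ι × ℕ) :
    deltaEval δ c (X v) = δ^[v.2] (c v.1) :=
  aeval_X _ _

lemma deltaEval_id_surjective (δ : R → R) : Function.Surjective (deltaEval (ι := R) δ id) :=
  fun r => ⟨X (r, 0), deltaEval_X _ _ _⟩

lemma comp_deltaEval {S : Type*} [CommRing S] {δ : R → R} {δS : S → S} (f : R →+* S)
    (hf : Function.Semiconj f δ δS) (c : ι → R) :
    f.comp (deltaEval δ c) = deltaEval δS (f ∘ c) :=
  ringHom_ext' (RingHom.ext_int _ _) fun v => by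
    simp only [RingHom.comp_apply, deltaEval_X, Function.comp_apply, hf.iterate_right v.2 _]

variable {Cp : MvPolynomial (Fin 2) ℤ}
  (hCp : (p : MvPolynomial (Fin 2) ℤ) * Cp = X 0 ^ p + X 1 ^ p - (X 0 + X 1) ^ p)

lemma deltaEval_comp_frobeniusLift {δ : R → R} (hδ : IsPDeriv p Cp δ) (c : ι → R) :
    (deltaEval δ c).comp (frobeniusLift p) = (hδ.frobeniusLift hCp).comp (deltaEval δ c) :=
  ringHom_ext' (RingHom.ext_int _ _) fun v => by
    simp only [RingHom.comp_apply, frobeniusLift_X, map_add, map_mul, map_pow, map_natCast,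
      deltaEval_X, IsPDeriv.frobeniusLift_apply, Function.iterate_succ_apply']

variable [Fact p.Prime]

/-- Modulo `p` the lift reduces to the Frobenius of `MvPolynomial (ι × ℕ) (ZMod p)`. -/
lemma dvd_frobeniusLift_sub_pow (b : FreeDeltaRing ι) :
    (p : FreeDeltaRing ι) ∣ frobeniusLift p b - b ^ p := by
  let π : FreeDeltaRing ι →+* MvPolynomial (ι × ℕ) (ZMod p) := map (Int.castRingHom _)
  have hπ : π.comp (frobeniusLift p) = (frobenius _ p).comp π := by
    refine ringHom_ext (fun r => ?_) fun v => ?_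
    · simp [π, frobeniusLift]
    · simp [π, frobeniusLift_X, frobenius_def]
  have h : frobeniusLift p b - b ^ p ∈ RingHom.ker π := by
    rw [RingHom.mem_ker, map_sub, ← RingHom.comp_apply, hπ]
    simp [frobenius_def]
  rw [ker_map, ZMod.ker_intCastRingHom, Ideal.map_span, Set.image_singleton,
    Ideal.mem_span_singleton] at h
  simpa using h

lemma isLeftRegular_natCast : IsLeftRegular (p : FreeDeltaRing ι) :=
  (IsRegular.of_ne_zero (Nat.cast_ne_zero.2 (Fact.out : p.Prime).ne_zero)).left

noncomputable def delta (b : FreeDeltaRing ι) : FreeDeltaRing ι :=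
  (dvd_frobeniusLift_sub_pow p b).choose

lemma natCast_mul_delta (b : FreeDeltaRing ι) :
    (p : FreeDeltaRing ι) * delta p b = frobeniusLift p b - b ^ p :=
  (dvd_frobeniusLift_sub_pow p b).choose_spec.symm

lemma delta_X (v : ι × ℕ) : delta p (X v) = X (v.1, v.2 + 1) :=
  isLeftRegular_natCast p <|
    show (p : FreeDeltaRing ι) * delta p (X v) = (p : FreeDeltaRing ι) * X (v.1, v.2 + 1) by
      rw [natCast_mul_delta, frobeniusLift_X, add_sub_cancel_left]

include hCp in
lemma isPDeriv_delta : IsPDeriv p Cp (delta p : FreeDeltaRing ι → FreeDeltaRing ι) := by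
  refine ⟨isLeftRegular_natCast p ?_, fun x y => isLeftRegular_natCast p ?_,
    fun x y => isLeftRegular_natCast p ?_⟩
  · simp [natCast_mul_delta]
  · linear_combination natCast_mul_delta p (x + y) - natCast_mul_delta p x -
      natCast_mul_delta p y - IsPDeriv.natCast_mul_aeval hCp x y + map_add (frobeniusLift p) x y
  · have hx := natCast_mul_delta p x
    have hy := natCast_mul_delta p y
    linear_combination natCast_mul_delta p (x * y) + map_mul (frobeniusLift p) x y -
      frobeniusLift p y * hx - ((p : FreeDeltaRing ι) * delta p x + x ^ p) * hy

include hCp in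
lemma deltaEval_delta {δ : R → R} (hδ : IsPDeriv p Cp δ) (c : ι → R) (b : FreeDeltaRing ι) :
    deltaEval δ c (delta p b) = δ (deltaEval δ c b) := by
  refine hδ.map_comp_of_mem_closure hCp (isPDeriv_delta p hCp) _ ?_ (mem_closure_range_X b)
  rintro _ ⟨v, rfl⟩
  simp only [delta_X, deltaEval_X, Function.iterate_succ_apply']

end FreeDeltaRing

section TransferRingHom

variable {A C : Type*} [NonAssocRing A] [NonAssocRing C]

def RingHom.ofInjectiveSemiconj (ι : A →+* C) (hι : Function.Injective ι) (f : A → A)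
    (ψ : C →+* C) (h : Function.Semiconj ι f ψ) : A →+* A where
  toFun := f
  map_one' := hι (by rw [h, map_one, map_one])
  map_mul' x y := hι (by simp only [h.eq, map_mul])
  map_zero' := hι (by rw [h, map_zero, map_zero])
  map_add' x y := hι (by simp only [h.eq, map_add])

def RingHom.ofSurjectiveSemiconj (π : A →+* C) (hπ : Function.Surjective π) (G : A →+* A)
    (f : C → C) (h : Function.Semiconj π G f) : C →+* C where
  toFun := f
  map_one' := by rw [← map_one π, ← h, map_one, map_one]
  map_mul' x y := by
    obtain ⟨a, rfl⟩ := hπ x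
    obtain ⟨b, rfl⟩ := hπ y
    rw [← map_mul, ← h, ← h, ← h, map_mul, map_mul]
  map_zero' := by rw [← map_zero π, ← h, map_zero, map_zero]
  map_add' x y := by
    obtain ⟨a, rfl⟩ := hπ x
    obtain ⟨b, rfl⟩ := hπ y
    rw [← map_add, ← h, ← h, ← h, map_add, map_add]

end TransferRingHom

namespace WittVector

open FreeDeltaRing

variable (p : ℕ) [Fact p.Prime] (m : ℕ)

local notation "𝕎" => WittVector p

noncomputable def freeDeltaWitt : 𝕎 (FreeDeltaRing ℕ) := mk p fun i => X (i, 0)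

/-- Universal polynomials, in the iterated `δ`-derivatives of the Witt coefficients, for the
coefficients of the shifted lateral Frobenius. -/
noncomputable def shiftedLateralFrobeniusPoly : 𝕎 (FreeDeltaRing ℕ) :=
  (exists_ghostMap_eq_shiftedGhost (m := m) (dvd_frobeniusLift_sub_pow p)
    (isLeftRegular_natCast p) (freeDeltaWitt p)).choose

lemma ghostMap_shiftedLateralFrobeniusPoly :
    ghostMap (shiftedLateralFrobeniusPoly p m) =
      shiftedGhost (frobeniusLift p) m (ghostMap (freeDeltaWitt p)) :=
  (exists_ghostMap_eq_shiftedGhost (m := m) (dvd_frobeniusLift_sub_pow p)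
    (isLeftRegular_natCast p) (freeDeltaWitt p)).choose_spec.1

lemma dvd_coeff_shiftedLateralFrobeniusPoly_sub (n : ℕ) :
    (p : FreeDeltaRing ℕ) ∣ (shiftedLateralFrobeniusPoly p m).coeff n - X (n, 0) ^ p :=
  (exists_ghostMap_eq_shiftedGhost (m := m) (dvd_frobeniusLift_sub_pow p)
    (isLeftRegular_natCast p) (freeDeltaWitt p)).choose_spec.2 n

variable {R : Type*} [CommRing R]

noncomputable def shiftedLateralFrobeniusFun (δ : R → R) (x : 𝕎 R) : 𝕎 R :=
  map (deltaEval δ x.coeff) (shiftedLateralFrobeniusPoly p m)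

variable {p m}

lemma map_deltaEval_freeDeltaWitt (δ : R → R) (x : 𝕎 R) :
    map (deltaEval δ x.coeff) (freeDeltaWitt p) = x :=
  ext fun n => deltaEval_X _ _ (n, 0)

lemma ghostMap_shiftedLateralFrobeniusFun {Cp : MvPolynomial (Fin 2) ℤ}
    (hCp : (p : MvPolynomial (Fin 2) ℤ) * Cp = X 0 ^ p + X 1 ^ p - (X 0 + X 1) ^ p)
    {δ : R → R} (hδ : IsPDeriv p Cp δ) (x : 𝕎 R) :
    ghostMap (shiftedLateralFrobeniusFun p m δ x) =
      shiftedGhost (hδ.frobeniusLift hCp) m (ghostMap x) := by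
  funext k
  have h := congrFun (ghostMap_shiftedLateralFrobeniusPoly p m) k
  have hx : ∀ n, deltaEval δ x.coeff (ghostComponent n (freeDeltaWitt p)) = ghostComponent n x :=
    fun n => by rw [← ghostComponent_map, map_deltaEval_freeDeltaWitt]
  simp only [shiftedGhost_apply, ghostMap_apply] at h ⊢
  rw [shiftedLateralFrobeniusFun, ghostComponent_map, h]
  split_ifs
  · rw [← RingHom.comp_apply, deltaEval_comp_frobeniusLift p hCp hδ, RingHom.comp_apply, hx]
  · rw [hx]

lemma coeff_shiftedLateralFrobeniusFun_sub_mem (δ : R → R) (x : 𝕎 R) (n : ℕ) :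
    (shiftedLateralFrobeniusFun p m δ x).coeff n - x.coeff n ^ p ∈ Ideal.span {(p : R)} := by
  obtain ⟨c, hc⟩ := dvd_coeff_shiftedLateralFrobeniusPoly_sub p m n
  refine Ideal.mem_span_singleton.2 ⟨deltaEval δ x.coeff c, ?_⟩
  simpa [shiftedLateralFrobeniusFun, deltaEval_X] using congrArg (deltaEval δ x.coeff) hc

lemma map_shiftedLateralFrobeniusFun {S : Type*} [CommRing S] {δ : R → R} {δS : S → S}
    (f : R →+* S) (hf : Function.Semiconj f δ δS) (x : 𝕎 R) :
    map f (shiftedLateralFrobeniusFun p m δ x) = shiftedLateralFrobeniusFun p m δS (map f x) :=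
  ext fun _ => congrFun (congrArg DFunLike.coe (comp_deltaEval f hf x.coeff)) _

noncomputable def shiftedLateralFrobenius {Cp : MvPolynomial (Fin 2) ℤ}
    (hCp : (p : MvPolynomial (Fin 2) ℤ) * Cp = X 0 ^ p + X 1 ^ p - (X 0 + X 1) ^ p)
    {δ : R → R} (hδ : IsPDeriv p Cp δ) (m : ℕ) : 𝕎 R →+* 𝕎 R :=
  RingHom.ofSurjectiveSemiconj (map (deltaEval δ id))
    (map_surjective _ (deltaEval_id_surjective δ))
    (RingHom.ofInjectiveSemiconj ghostMap (ghostMap_injective (isLeftRegular_natCast p))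
      (shiftedLateralFrobeniusFun p m (delta p)) _
      (ghostMap_shiftedLateralFrobeniusFun hCp (isPDeriv_delta p hCp)))
    (shiftedLateralFrobeniusFun p m δ)
    (map_shiftedLateralFrobeniusFun _ (deltaEval_delta p hCp hδ id))

lemma coe_shiftedLateralFrobenius {Cp : MvPolynomial (Fin 2) ℤ}
    (hCp : (p : MvPolynomial (Fin 2) ℤ) * Cp = X 0 ^ p + X 1 ^ p - (X 0 + X 1) ^ p)
    {δ : R → R} (hδ : IsPDeriv p Cp δ) (m : ℕ) :
    ⇑(shiftedLateralFrobenius hCp hδ m) = shiftedLateralFrobeniusFun p m δ :=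
  rfl

end WittVector

/-- Existence of the `m`-shifted lateral Frobenius as a ring homomorphism on
`p`-typical Witt vectors; it agrees with `φ` on the first `m+1` ghost components,
shifts the later ghost components, and its Witt coefficients are congruent to
`p`-th powers of the original ones modulo `p`. -/
theorem exists_shifted_lateral_frobenius
    (p : ℕ) [hp : Fact p.Prime] (R : Type*) [CommRing R]
    (Cp : MvPolynomial (Fin 2) ℤ)
    (hCp : (p : MvPolynomial (Fin 2) ℤ) * Cp =
      X 0 ^ p + X 1 ^ p - (X 0 + X 1) ^ p)
    (δ : R → R) (hδ : IsPDeriv p Cp δ)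
    (φ : R → R) (hφ : ∀ x : R, φ x = x ^ p + (p : R) * δ x)
    (m : ℕ) :
    ∃ tF : WittVector p R →+* WittVector p R,
      (∀ k ≤ m, ∀ x : WittVector p R,
        WittVector.ghostComponent k (tF x) = φ (WittVector.ghostComponent k x)) ∧
      (∀ k, m + 1 ≤ k → ∀ x : WittVector p R,
        WittVector.ghostComponent k (tF x) = WittVector.ghostComponent (k + 1) x) ∧
      (∀ h : ℕ, ∀ x : WittVector p R,
        (tF x).coeff h - x.coeff h ^ p ∈ Ideal.span {(p : R)}) := by
  have hghost (k : ℕ) (x : WittVector p R) :=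
    congrFun (ghostMap_shiftedLateralFrobeniusFun (m := m) hCp hδ x) k
  refine ⟨shiftedLateralFrobenius hCp hδ m, fun k hk x => ?_, fun k hk x => ?_,
    fun h x => coeff_shiftedLateralFrobeniusFun_sub_mem δ x h⟩
  · simpa [coe_shiftedLateralFrobenius, shiftedGhost_apply, hk, IsPDeriv.frobeniusLift_apply,
      hφ] using hghost k x
  · simpa [coe_shiftedLateralFrobenius, shiftedGhost_apply, show ¬k ≤ m by omega]
      using hghost k x
end

section
/- Let p be a prime which is a non-zero-divisor in the commutative ring R, let δ be a p-derivation on R with associated Frobenius lift φ, let m ≥ 0, and let t̃F : 𝕎(R) → 𝕎(R) be a map satisfying the m-shifted lateral Frobenius ghost conditions. Then for every h ≥ 0, the h-th Witt coefficient of t̃F(x) depends only on the Witt coefficients x_0, …, x_{h+1} of x: if x, y ∈ 𝕎(R) satisfy x_i = y_i for all 0 ≤ i ≤ h+1, then (t̃F(x))_h = (t̃F(y))_h. In particular, t̃F descends to well-defined maps on truncations, sending Witt vectors of length m+n+1 to Witt vectors of length m+n. -/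
open MvPolynomial WittVector

/-- The `k`-th ghost component only depends on coefficients `0, …, k`. -/
lemma ghost_eq_of_coeff_eq (p : ℕ) [hp : Fact p.Prime] {R : Type*} [CommRing R]
    (k : ℕ) (x y : WittVector p R) (h : ∀ i ≤ k, x.coeff i = y.coeff i) :
    WittVector.ghostComponent k x = WittVector.ghostComponent k y := by
  simp only [WittVector.ghostComponent_apply, aeval_wittPolynomial]
  refine Finset.sum_congr rfl fun i hi => ?_
  rw [h i (Nat.lt_succ_iff.mp (Finset.mem_range.mp hi))]

/-- When `p` is a non-zero-divisor, ghost components `0, …, h` determine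
coefficients `0, …, h`. -/
lemma coeff_eq_of_ghost_eq (p : ℕ) [hp : Fact p.Prime] {R : Type*} [CommRing R]
    (hpR : (p : R) ∈ nonZeroDivisors R) (h : ℕ) (a b : WittVector p R)
    (hg : ∀ k ≤ h, WittVector.ghostComponent k a = WittVector.ghostComponent k b) :
    ∀ k ≤ h, a.coeff k = b.coeff k := by
  intro k
  induction k using Nat.strong_induction_on with
  | _ k ih =>
    intro hk
    have hgk := hg k hk
    simp only [WittVector.ghostComponent_apply, aeval_wittPolynomial,
      Finset.sum_range_succ, Nat.sub_self, pow_zero, pow_one] at hgk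
    have hsum : ∑ i ∈ Finset.range k, (p : R) ^ i * a.coeff i ^ p ^ (k - i)
        = ∑ i ∈ Finset.range k, (p : R) ^ i * b.coeff i ^ p ^ (k - i) := by
      refine Finset.sum_congr rfl fun i hi => ?_
      rw [ih i (Finset.mem_range.mp hi) (le_trans (le_of_lt (Finset.mem_range.mp hi)) hk)]
    rw [hsum] at hgk
    have hcancel : (p : R) ^ k * a.coeff k = (p : R) ^ k * b.coeff k := by
      exact add_left_cancel hgk
    exact (mul_cancel_left_mem_nonZeroDivisors (pow_mem hpR k)).mp hcancel

/-- The `h`-th Witt coefficient of `t̃F(x)` depends only on the coefficients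
`x_0, …, x_{h+1}` of `x`; in particular `t̃F` descends to maps on truncated
Witt vectors, from length `m+n+1` to length `m+n`. -/
theorem lateral_frobenius_coeff_dependence
    (p : ℕ) [hp : Fact p.Prime] (R : Type*) [CommRing R]
    (hpR : (p : R) ∈ nonZeroDivisors R)
    (Cp : MvPolynomial (Fin 2) ℤ)
    (hCp : (p : MvPolynomial (Fin 2) ℤ) * Cp =
      X 0 ^ p + X 1 ^ p - (X 0 + X 1) ^ p)
    (δ : R → R) (hδ : IsPDeriv p Cp δ)
    (φ : R → R) (hφ : ∀ x : R, φ x = x ^ p + (p : R) * δ x)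
    (m : ℕ)
    (tF : WittVector p R → WittVector p R)
    (h1 : ∀ k ≤ m, ∀ x : WittVector p R,
      WittVector.ghostComponent k (tF x) = φ (WittVector.ghostComponent k x))
    (h2 : ∀ k, m + 1 ≤ k → ∀ x : WittVector p R,
      WittVector.ghostComponent k (tF x) = WittVector.ghostComponent (k + 1) x) :
    (∀ h : ℕ, ∀ x y : WittVector p R,
      (∀ i ≤ h + 1, x.coeff i = y.coeff i) → (tF x).coeff h = (tF y).coeff h) ∧
    (∀ n : ℕ, ∃ g : TruncatedWittVector p (m + n + 1) R → TruncatedWittVector p (m + n) R,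
      ∀ x : WittVector p R,
        g (WittVector.truncate (m + n + 1) x) = WittVector.truncate (m + n) (tF x)) := by
  have main : ∀ h : ℕ, ∀ x y : WittVector p R,
      (∀ i ≤ h + 1, x.coeff i = y.coeff i) → (tF x).coeff h = (tF y).coeff h := by
    intro h x y hxy
    have hg : ∀ k ≤ h, WittVector.ghostComponent k (tF x) =
        WittVector.ghostComponent k (tF y) := by
      intro k hk
      rcases le_or_gt k m with hkm | hkm
      · rw [h1 k hkm x, h1 k hkm y,
          ghost_eq_of_coeff_eq p k x y (fun i hi => hxy i (le_trans hi (by omega)))]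
      · rw [h2 k hkm x, h2 k hkm y,
          ghost_eq_of_coeff_eq p (k + 1) x y (fun i hi => hxy i (by omega))]
    exact coeff_eq_of_ghost_eq p hpR h (tF x) (tF y) hg h le_rfl
  refine ⟨main, fun n => ?_⟩
  refine ⟨fun t => WittVector.truncate (m + n) (tF t.out), fun x => ?_⟩
  have key : ∀ h : ℕ, h < m + n →
      (tF (WittVector.truncate (m + n + 1) x).out).coeff h = (tF x).coeff h := by
    intro h hh
    refine main h _ x fun i hi => ?_
    have hi' : i < m + n + 1 := by omega
    have := TruncatedWittVector.coeff_out (WittVector.truncate (m + n + 1) x) ⟨i, hi'⟩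
    rw [this, WittVector.coeff_truncate]
  ext i
  rw [WittVector.coeff_truncate, WittVector.coeff_truncate]
  exact key i i.is_lt
end

section
/- Let p be a prime which is a non-zero-divisor in the commutative ring R, let δ be a p-derivation on R with associated Frobenius lift φ, let m ≥ 0, and let t̃F : 𝕎(R) → 𝕎(R) be a map satisfying the m-shifted lateral Frobenius ghost conditions. Then t̃F acts on the first m+1 Witt coordinates by φ: for every x ∈ 𝕎(R) and every 0 ≤ h ≤ m, the h-th Witt coefficient of t̃F(x) equals φ(x_h), where x_h is the h-th Witt coefficient of x. -/
open MvPolynomial WittVector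

/-- The `m`-shifted lateral Frobenius acts on the first `m+1` Witt coordinates
by the Frobenius lift `φ`. -/
theorem lateral_frobenius_first_coords
    (p : ℕ) [hp : Fact p.Prime] (R : Type*) [CommRing R]
    (hpR : (p : R) ∈ nonZeroDivisors R)
    (Cp : MvPolynomial (Fin 2) ℤ)
    (hCp : (p : MvPolynomial (Fin 2) ℤ) * Cp =
      X 0 ^ p + X 1 ^ p - (X 0 + X 1) ^ p)
    (δ : R → R) (hδ : IsPDeriv p Cp δ)
    (φ : R → R) (hφ : ∀ x : R, φ x = x ^ p + (p : R) * δ x)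
    (m : ℕ)
    (tF : WittVector p R → WittVector p R)
    (h1 : ∀ k ≤ m, ∀ x : WittVector p R,
      WittVector.ghostComponent k (tF x) = φ (WittVector.ghostComponent k x))
    (h2 : ∀ k, m + 1 ≤ k → ∀ x : WittVector p R,
      WittVector.ghostComponent k (tF x) = WittVector.ghostComponent (k + 1) x) :
    ∀ x : WittVector p R, ∀ h ≤ m, (tF x).coeff h = φ (x.coeff h) := by
  obtain ⟨hδ1, hδadd, hδmul⟩ := hδ
  have hφ1 : φ 1 = 1 := by rw [hφ 1, hδ1]; ring
  have hφadd : ∀ a b : R, φ (a + b) = φ a + φ b := by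
    intro a b
    have hC : (p : R) * MvPolynomial.aeval ![a, b] Cp = a ^ p + b ^ p - (a + b) ^ p := by
      have := congrArg (MvPolynomial.aeval ![a, b]) hCp
      simpa using this
    rw [hφ, hφ, hφ, hδadd]
    linear_combination hC
  have hφmul : ∀ a b : R, φ (a * b) = φ a * φ b := by
    intro a b; rw [hφ, hφ, hφ, hδmul]; ring
  have hφ0 : φ 0 = 0 := by
    have h := hφadd 0 0
    rw [add_zero] at h
    exact (left_eq_add.mp h)
  let φ' : R →+* R :=
    { toFun := φ, map_one' := hφ1, map_mul' := hφmul, map_zero' := hφ0,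
      map_add' := hφadd }
  have hφnat : ∀ n : ℕ, φ (n : R) = (n : R) := fun n => map_natCast φ' n
  -- Main induction
  intro x
  have key : ∀ h, h ≤ m → (tF x).coeff h = φ (x.coeff h) := by
    intro h
    induction h using Nat.strong_induction_on with
    | _ h IH =>
      intro hhm
      have hg := h1 h hhm x
      rw [ghostComponent_apply, ghostComponent_apply, aeval_wittPolynomial,
        aeval_wittPolynomial] at hg
      have hmap : φ (∑ i ∈ Finset.range (h + 1), (p : R) ^ i * x.coeff i ^ p ^ (h - i))
          = ∑ i ∈ Finset.range (h + 1), (p : R) ^ i * (φ (x.coeff i)) ^ p ^ (h - i) := by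
        rw [show φ (∑ i ∈ Finset.range (h + 1), (p : R) ^ i * x.coeff i ^ p ^ (h - i)) =
            φ' (∑ i ∈ Finset.range (h + 1), (p : R) ^ i * x.coeff i ^ p ^ (h - i)) from rfl,
          map_sum]
        refine Finset.sum_congr rfl fun i _ => ?_
        rw [map_mul, map_pow, map_pow, map_natCast]
        rfl
      rw [hmap] at hg
      -- split off the last term
      rw [Finset.sum_range_succ, Finset.sum_range_succ] at hg
      have hrest : ∀ i ∈ Finset.range h,
          (p : R) ^ i * (tF x).coeff i ^ p ^ (h - i) =
            (p : R) ^ i * (φ (x.coeff i)) ^ p ^ (h - i) := by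
        intro i hi
        rw [IH i (Finset.mem_range.mp hi) (le_trans (le_of_lt (Finset.mem_range.mp hi)) hhm)]
      rw [Finset.sum_congr rfl hrest] at hg
      have hcancel : (p : R) ^ h * (tF x).coeff h ^ p ^ (h - h) =
          (p : R) ^ h * (φ (x.coeff h)) ^ p ^ (h - h) := by
        exact add_left_cancel hg
      rw [Nat.sub_self, pow_zero, pow_one, pow_one] at hcancel
      exact (mul_cancel_left_mem_nonZeroDivisors (pow_mem hpR h)).mp hcancel
  exact key
end

section
/- Let R be a commutative O-algebra with π-derivation δ_R, and let B be a commutative R-algebra with π-derivation δ compatible with δ_R, i.e. δ(u(r)) = u(δ_R(r)) for all r ∈ R, where u : R → B is the structure map. Let a, b, a_1, …, a_k ∈ B and suppose a − b ∈ [a_1, …, a_k]. Then δ(a) − δ(b) ∈ [b, a_1, …, a_k, δ(a_1), …, δ(a_k)], i.e. δ(a) − δ(b) = G(b, a_1, …, a_k, δ(a_1), …, δ(a_k)) for some centered polynomial G ∈ R[T_0, T_1, …, T_{2k}]. -/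
/-!
Write `a = b + t` with `t = F(a₁, …, aₖ)`, `F` centered, so that `δa - δb = δt + C(b, t)`.
Values of centered polynomials at `v = (b, aᵢ, δaᵢ)` form an ideal of the `R`-subalgebra
generated by `v`, and polynomial maps respect congruences modulo it; as `C` has no constant term
(`π` is a non-zero-divisor), `C(b, t)` lies in this ideal. For `δt`, induct on the polynomial `p`:
the sum and product rules give `δ(p(a)) ≡ δ(p(0))` modulo the ideal, with `δ(p(0))` in the
subalgebra because `δ` is compatible with `δ_R`; for centered `p` the right side is `δ 0 = 0`.
-/

open MvPolynomial

/-- A `π`-derivation on a commutative `O`-algebra `B`, relative to the polynomial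
`C ∈ O[X,Y]` satisfying `π·C = X^q + Y^q - (X+Y)^q`. -/
def IsPiDeriv {O : Type*} [CommRing O] (π : O) (q : ℕ) (C : MvPolynomial (Fin 2) O)
    {B : Type*} [CommRing B] [Algebra O B] (δ : B → B) : Prop :=
  δ 1 = 0 ∧
  (∀ x y : B, δ (x + y) = δ x + δ y + MvPolynomial.aeval ![x, y] C) ∧
  (∀ x y : B, δ (x * y) = x ^ q * δ y + y ^ q * δ x + algebraMap O B π * δ x * δ y)

/-- A polynomial is centered if it vanishes when all variables are set to `0`. -/
def Centered {R : Type*} [CommRing R] {σ : Type*} (F : MvPolynomial σ R) : Prop :=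
  MvPolynomial.eval (fun _ => (0 : R)) F = 0

theorem centered_iff_constantCoeff_eq_zero {R σ : Type*} [CommRing R] {F : MvPolynomial σ R} :
    Centered F ↔ constantCoeff F = 0 := by
  rw [Centered, eval_zero']

theorem Subalgebra.mvPolynomial_aeval_mem {R A σ : Type*} [CommRing R] [CommRing A] [Algebra R A]
    (T : Subalgebra R A) {x : σ → A} (hx : ∀ i, x i ∈ T) (p : MvPolynomial σ R) :
    aeval x p ∈ T :=
  Algebra.adjoin_le (Set.range_subset_iff.2 hx) (by rw [← aeval_range]; exact ⟨p, rfl⟩)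

/-- The set `[v]` in the paper's notation. -/
def centeredValues (R : Type*) {B ι : Type*} [CommRing R] [CommRing B] [Algebra R B]
    (v : ι → B) : Set B :=
  {x | ∃ G : MvPolynomial ι R, Centered G ∧ x = aeval v G}

namespace centeredValues

variable {R B ι : Type*} [CommRing R] [CommRing B] [Algebra R B] {v : ι → B} {x y : B}

theorem self_mem (i : ι) : v i ∈ centeredValues R v :=
  ⟨X i, by simp [centered_iff_constantCoeff_eq_zero], (aeval_X v i).symm⟩

theorem zero_mem : (0 : B) ∈ centeredValues R v :=
  ⟨0, by simp [centered_iff_constantCoeff_eq_zero], (map_zero _).symm⟩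

theorem add_mem (hx : x ∈ centeredValues R v) (hy : y ∈ centeredValues R v) :
    x + y ∈ centeredValues R v := by
  obtain ⟨F, hF, rfl⟩ := hx
  obtain ⟨G, hG, rfl⟩ := hy
  rw [centered_iff_constantCoeff_eq_zero] at hF hG
  exact ⟨F + G, by simp [centered_iff_constantCoeff_eq_zero, hF, hG], (map_add _ F G).symm⟩

theorem mul_mem (hx : x ∈ Algebra.adjoin R (Set.range v))
    (hy : y ∈ centeredValues R v) : x * y ∈ centeredValues R v := by
  rw [← aeval_range] at hx
  obtain ⟨F, rfl⟩ := hx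
  obtain ⟨G, hG, rfl⟩ := hy
  rw [centered_iff_constantCoeff_eq_zero] at hG
  exact ⟨F * G, by simp [centered_iff_constantCoeff_eq_zero, hG], (map_mul _ F G).symm⟩

theorem subset_adjoin :
    centeredValues R v ⊆ Algebra.adjoin R (Set.range v) := by
  rintro x ⟨G, -, rfl⟩
  rw [← aeval_range]
  exact ⟨G, rfl⟩

theorem pow_mem (hx : x ∈ centeredValues R v) {n : ℕ} (hn : n ≠ 0) :
    x ^ n ∈ centeredValues R v := by
  obtain ⟨n, rfl⟩ := Nat.exists_eq_succ_of_ne_zero hn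
  exact pow_succ x n ▸ mul_mem (Subalgebra.pow_mem _ (subset_adjoin hx) n) hx

theorem aeval_sub_aeval_mem {σ : Type*} (D : MvPolynomial σ R) {x y : σ → B}
    (hx : ∀ i, x i ∈ Algebra.adjoin R (Set.range v))
    (hxy : ∀ i, x i - y i ∈ centeredValues R v) :
    aeval x D - aeval y D ∈ centeredValues R v := by
  induction D using MvPolynomial.induction_on with
  | C r => simpa using (zero_mem : (0 : B) ∈ centeredValues R v)
  | add p p' hp hp' =>
    rw [map_add, map_add, add_sub_add_comm]
    exact add_mem hp hp'
  | mul_X p n hp =>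
    have hy : y n ∈ Algebra.adjoin R (Set.range v) := by
      simpa using Subalgebra.sub_mem _ (hx n) (subset_adjoin (hxy n))
    have key : aeval x (p * X n) - aeval y (p * X n)
        = aeval x p * (x n - y n) + y n * (aeval x p - aeval y p) := by
      simp only [map_mul, aeval_X]; ring
    rw [key]
    exact add_mem (mul_mem (Subalgebra.mvPolynomial_aeval_mem _ hx p) (hxy n)) (mul_mem hy hp)

theorem aeval_sub_algebraMap_constantCoeff_mem {σ : Type*} (p : MvPolynomial σ R) {x : σ → B}
    (hx : ∀ i, x i ∈ centeredValues R v) :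
    aeval x p - algebraMap R B (constantCoeff p) ∈ centeredValues R v := by
  simpa using aeval_sub_aeval_mem p (y := 0) (fun i => subset_adjoin (hx i)) (by simpa using hx)

theorem aeval_mem_of_centered {σ : Type*} {p : MvPolynomial σ R} (hp : Centered p) {x : σ → B}
    (hx : ∀ i, x i ∈ centeredValues R v) : aeval x p ∈ centeredValues R v := by
  simpa [(centered_iff_constantCoeff_eq_zero).1 hp] using
    aeval_sub_algebraMap_constantCoeff_mem p hx

end centeredValues

theorem constantCoeff_eq_zero_of_C_mul_eq {O : Type*} [CommRing O] {π : O}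
    (hπ : π ∈ nonZeroDivisors O) {q : ℕ} (hq : 0 < q) {C : MvPolynomial (Fin 2) O}
    (hC : MvPolynomial.C π * C = X 0 ^ q + X 1 ^ q - (X 0 + X 1) ^ q) :
    constantCoeff C = 0 := by
  have h := congrArg constantCoeff hC
  simp only [map_mul, map_add, map_sub, map_pow, constantCoeff_C, constantCoeff_X, add_zero,
    zero_pow hq.ne', sub_self] at h
  exact hπ.2 _ (by rw [mul_comm, h])

namespace IsPiDeriv

variable {O B : Type*} [CommRing O] [CommRing B] [Algebra O B] {π : O} {q : ℕ}
  {C : MvPolynomial (Fin 2) O} {δ : B → B}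

theorem map_add (hδ : IsPiDeriv π q C δ) (x y : B) :
    δ (x + y) = δ x + δ y + aeval ![x, y] C :=
  hδ.2.1 x y

theorem map_mul (hδ : IsPiDeriv π q C δ) (x y : B) :
    δ (x * y) = x ^ q * δ y + y ^ q * δ x + algebraMap O B π * δ x * δ y :=
  hδ.2.2 x y

theorem map_zero (hδ : IsPiDeriv π q C δ) (hC0 : constantCoeff C = 0) : δ 0 = 0 := by
  have h := hδ.map_add 0 0
  have hv : (![0, 0] : Fin 2 → B) = 0 := by ext i; fin_cases i <;> rfl
  rw [add_zero, hv, aeval_zero, hC0, RingHom.map_zero, add_zero] at h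
  linear_combination -h

open centeredValues

variable {R ι σ : Type*} [CommRing R] [Algebra O R] [Algebra R B] [IsScalarTower O R B]
  {δR : R → R} {v : ι → B} {av : σ → B}

theorem map_aeval_sub_map_algebraMap_constantCoeff_mem (hδ : IsPiDeriv π q C δ) (hq : 0 < q)
    (hC0 : constantCoeff C = 0) (hcomp : ∀ r : R, δ (algebraMap R B r) = algebraMap R B (δR r))
    (hav : ∀ i, av i ∈ centeredValues R v) (hδav : ∀ i, δ (av i) ∈ centeredValues R v)
    (p : MvPolynomial σ R) :
    δ (aeval av p) - δ (algebraMap R B (constantCoeff p)) ∈ centeredValues R v := by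
  have hT : ∀ p : MvPolynomial σ R, aeval av p ∈ Algebra.adjoin R (Set.range v) :=
    Subalgebra.mvPolynomial_aeval_mem _ fun i => subset_adjoin (hav i)
  induction p using MvPolynomial.induction_on with
  | C r => simpa using centeredValues.zero_mem
  | add p p' hp hp' =>
    set x := aeval av p
    set x' := aeval av p'
    set c := algebraMap R B (constantCoeff p)
    set c' := algebraMap R B (constantCoeff p')
    have hC : aeval ![x, x'] C - aeval ![c, c'] C ∈ centeredValues R v := by
      rw [← aeval_map_algebraMap R _ C, ← aeval_map_algebraMap R _ C]
      refine aeval_sub_aeval_mem (x := ![x, x']) (y := ![c, c']) _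
        (Fin.forall_fin_two.2 ⟨hT p, hT p'⟩) (Fin.forall_fin_two.2 ⟨?_, ?_⟩) <;>
      exact aeval_sub_algebraMap_constantCoeff_mem _ hav
    have key : δ (aeval av (p + p')) - δ (algebraMap R B (constantCoeff (p + p')))
        = (δ x - δ c) + (δ x' - δ c') + (aeval ![x, x'] C - aeval ![c, c'] C) := by
      rw [_root_.map_add, _root_.map_add, RingHom.map_add, hδ.map_add, hδ.map_add]
      ring
    rw [key]
    exact add_mem (add_mem hp hp') hC
  | mul_X p n hp =>
    have hδT : δ (aeval av p) ∈ Algebra.adjoin R (Set.range v) := by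
      have hc : δ (algebraMap R B (constantCoeff p)) ∈ Algebra.adjoin R (Set.range v) :=
        hcomp _ ▸ Subalgebra.algebraMap_mem _ _
      simpa using Subalgebra.add_mem _ (subset_adjoin hp) hc
    have hπT : algebraMap O B π ∈ Algebra.adjoin R (Set.range v) := by
      rw [IsScalarTower.algebraMap_apply O R B]
      exact Subalgebra.algebraMap_mem _ _
    simp only [_root_.map_mul, constantCoeff_X, mul_zero, aeval_X, RingHom.map_zero]
    rw [hδ.map_zero hC0, sub_zero, hδ.map_mul]
    refine add_mem (add_mem ?_ ?_) ?_
    · exact mul_mem (Subalgebra.pow_mem _ (hT p) q) (hδav n)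
    · exact mul_comm (δ (aeval av p)) _ ▸ mul_mem hδT (pow_mem (hav n) hq.ne')
    · exact mul_mem (Subalgebra.mul_mem _ hπT hδT) (hδav n)

theorem map_aeval_mem_of_centered (hδ : IsPiDeriv π q C δ) (hq : 0 < q)
    (hC0 : constantCoeff C = 0) (hcomp : ∀ r : R, δ (algebraMap R B r) = algebraMap R B (δR r))
    (hav : ∀ i, av i ∈ centeredValues R v) (hδav : ∀ i, δ (av i) ∈ centeredValues R v)
    {p : MvPolynomial σ R} (hp : Centered p) : δ (aeval av p) ∈ centeredValues R v := by
  simpa [(centered_iff_constantCoeff_eq_zero).1 hp, hδ.map_zero hC0] using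
    hδ.map_aeval_sub_map_algebraMap_constantCoeff_mem hq hC0 hcomp hav hδav p

end IsPiDeriv

theorem piDeriv_sub_of_centered_mem_general
    {O R B : Type*} [CommRing O] [CommRing R] [CommRing B]
    [Algebra O R] [Algebra O B] [Algebra R B] [IsScalarTower O R B]
    (π : O) (hπ : π ∈ nonZeroDivisors O) (q : ℕ) (hq : 1 ≤ q)
    (C : MvPolynomial (Fin 2) O)
    (hC : MvPolynomial.C π * C = X 0 ^ q + X 1 ^ q - (X 0 + X 1) ^ q)
    (δR : R → R)
    (δ : B → B) (hδ : IsPiDeriv π q C δ)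
    (hcomp : ∀ r : R, δ (algebraMap R B r) = algebraMap R B (δR r))
    (k : ℕ) (a b : B) (av : Fin k → B)
    (hab : ∃ F : MvPolynomial (Fin k) R, Centered F ∧
      a - b = MvPolynomial.aeval av F) :
    ∃ G : MvPolynomial (Unit ⊕ Fin k ⊕ Fin k) R, Centered G ∧
      δ a - δ b =
        MvPolynomial.aeval
          (Sum.elim (fun _ => b) (Sum.elim av fun i => δ (av i))) G := by
  obtain ⟨F, hF, hab⟩ := hab
  set v : Unit ⊕ Fin k ⊕ Fin k → B := Sum.elim (fun _ => b) (Sum.elim av fun i => δ (av i))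
  have hC0 := constantCoeff_eq_zero_of_C_mul_eq hπ hq hC
  have hb : b ∈ centeredValues R v := centeredValues.self_mem (Sum.inl ())
  have hav : ∀ i, av i ∈ centeredValues R v := fun i =>
    centeredValues.self_mem (Sum.inr (Sum.inl i))
  have hδav : ∀ i, δ (av i) ∈ centeredValues R v := fun i =>
    centeredValues.self_mem (Sum.inr (Sum.inr i))
  have ht : aeval av F ∈ centeredValues R v := centeredValues.aeval_mem_of_centered hF hav
  have hδt : δ (aeval av F) ∈ centeredValues R v :=
    hδ.map_aeval_mem_of_centered hq hC0 hcomp hav hδav hF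
  have hCbt : aeval ![b, aeval av F] C ∈ centeredValues R v := by
    rw [← aeval_map_algebraMap R]
    refine centeredValues.aeval_mem_of_centered ?_ (Fin.forall_fin_two.2 ⟨hb, ht⟩)
    rw [centered_iff_constantCoeff_eq_zero, constantCoeff_map, hC0, RingHom.map_zero]
  show δ a - δ b ∈ centeredValues R v
  rw [eq_add_of_sub_eq' hab, hδ.map_add, add_assoc, add_sub_cancel_left]
  exact centeredValues.add_mem hδt hCbt

/-- If `a - b ∈ [a_1, …, a_k]`, then
`δ(a) - δ(b) ∈ [b, a_1, …, a_k, δ(a_1), …, δ(a_k)]`. -/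
theorem piDeriv_sub_of_centered_mem
    {O R B : Type*} [CommRing O] [CommRing R] [CommRing B]
    [Algebra O R] [Algebra O B] [Algebra R B] [IsScalarTower O R B]
    (π : O) (hπ : π ∈ nonZeroDivisors O) (q : ℕ) (hq : 1 ≤ q)
    (C : MvPolynomial (Fin 2) O)
    (hC : MvPolynomial.C π * C = X 0 ^ q + X 1 ^ q - (X 0 + X 1) ^ q)
    (δR : R → R) (hδR : IsPiDeriv π q C δR)
    (δ : B → B) (hδ : IsPiDeriv π q C δ)
    (hcomp : ∀ r : R, δ (algebraMap R B r) = algebraMap R B (δR r))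
    (k : ℕ) (a b : B) (av : Fin k → B)
    (hab : ∃ F : MvPolynomial (Fin k) R, Centered F ∧
      a - b = MvPolynomial.aeval av F) :
    ∃ G : MvPolynomial (Unit ⊕ Fin k ⊕ Fin k) R, Centered G ∧
      δ a - δ b =
        MvPolynomial.aeval
          (Sum.elim (fun _ => b) (Sum.elim av fun i => δ (av i))) G :=
  piDeriv_sub_of_centered_mem_general π hπ q hq C hC δR δ hδ hcomp k a b av hab
end

section
/- Let B be a commutative O-algebra with π-derivation δ and associated Frobenius lift φ, and assume φ(π·1_B) = π·1_B. Then for every m ≥ 1 there exists a centered polynomial P ∈ O[T_0, …, T_{m−1}] such that for all a ∈ B: φ^m(a) = π^m·δ^m(a) + P(a, δ(a), …, δ^{m−1}(a)), where φ^m and δ^m denote m-fold iterates and P is evaluated in B via the structure map. -/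
open MvPolynomial

/-!
The axioms of a `π`-derivation say exactly that `φ x = x ^ q + π δ x` is a ring endomorphism.
Applying `φ` to `φ^n a = π^n δ^n a + P(a, …, δ^(n-1) a)` and using `φ π = π` gives
`φ^(n+1) a = π^n (δ^n a)^q + π^(n+1) δ^(n+1) a + P(φ a, …, φ (δ^(n-1) a))`, provided the
coefficients of `P` are fixed by `φ`; substituting `φ (δ^i a) = (δ^i a)^q + π δ^(i+1) a` yields
the next polynomial. Its coefficients lie in the subring of `O` fixed by `φ`, which contains `π`,
and `0^q = 0` keeps every polynomial centered.
-/

namespace Centered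

variable {R S σ τ : Type*} [CommRing R] [CommRing S]

theorem zero : Centered (0 : MvPolynomial σ R) := map_zero _

theorem add {P Q : MvPolynomial σ R} (hP : Centered P) (hQ : Centered Q) :
    Centered (P + Q) := by
  rw [Centered, map_add, hP, hQ, add_zero]

theorem C_mul_X_pow (c : R) (i : σ) {q : ℕ} (hq : q ≠ 0) :
    Centered (C c * X i ^ q : MvPolynomial σ R) := by
  simp [Centered, zero_pow hq]

theorem bind₁ {f : σ → MvPolynomial τ R} {P : MvPolynomial σ R} (hf : ∀ i, Centered (f i))
    (hP : Centered P) : Centered (bind₁ f P) := by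
  have hf' : (fun i => eval (fun _ => (0 : R)) (f i)) = fun _ => 0 := funext hf
  change eval₂Hom (RingHom.id R) _ (MvPolynomial.bind₁ f P) = 0
  rw [eval₂Hom_bind₁]
  exact (congrArg (eval₂Hom (RingHom.id R) · P) hf').trans hP

theorem map (f : R →+* S) {P : MvPolynomial σ R} (hP : Centered P) : Centered (map f P) := by
  have h : f (eval (fun _ => 0) P) = eval₂ f (fun _ => 0) P := by
    simp
  rw [Centered, eval_map, ← h, hP, map_zero]

end Centered

section FrobeniusIterate

variable {R B : Type*} [CommRing R] [CommRing B] (g : R →+* B) (Φ : B →+* B) (t : R) (q : ℕ)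
  (δ : B → B)

noncomputable def frobeniusSubst (n : ℕ) (i : Fin n) : MvPolynomial (Fin (n + 1)) R :=
  X i.castSucc ^ q + C t * X i.succ

variable {g Φ t q δ}

theorem Centered.frobeniusSubst (hq : q ≠ 0) {n : ℕ} (i : Fin n) :
    Centered (frobeniusSubst t q n i) := by
  simp [Centered, _root_.frobeniusSubst, zero_pow hq]

theorem eval₂Hom_frobeniusSubst (hΦ : ∀ x, Φ x = x ^ q + g t * δ x) (a : B) {n : ℕ}
    (i : Fin n) :
    eval₂Hom g (fun j : Fin (n + 1) => δ^[j] a) (frobeniusSubst t q n i) = Φ (δ^[i] a) := by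
  simp [frobeniusSubst, hΦ, Function.iterate_succ_apply']

theorem exists_centered_frobenius_iterate_eq (hq : q ≠ 0) (hg : Φ.comp g = g)
    (hΦ : ∀ x, Φ x = x ^ q + g t * δ x) (n : ℕ) :
    ∃ P : MvPolynomial (Fin n) R, Centered P ∧ ∀ a, Φ^[n] a =
      g t ^ n * δ^[n] a + eval₂Hom g (fun i : Fin n => δ^[i] a) P := by
  induction n with
  | zero => exact ⟨0, Centered.zero, fun a => by simp⟩
  | succ n ih =>
    obtain ⟨P, hP, hPa⟩ := ih
    refine ⟨C (t ^ n) * X (Fin.last n) ^ q + bind₁ (frobeniusSubst t q n) P,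
      (Centered.C_mul_X_pow _ _ hq).add ((Centered.bind₁ (Centered.frobeniusSubst hq) hP)), ?_⟩
    intro a
    have hPΦ : Φ (eval₂Hom g (fun i : Fin n => δ^[i] a) P) =
        eval₂Hom g (fun i : Fin n => Φ (δ^[i] a)) P := by
      rw [map_eval₂Hom, hg]
    simp only [Function.iterate_succ_apply', hPa, map_add, map_mul, map_pow, hPΦ,
      eval₂Hom_bind₁, eval₂Hom_frobeniusSubst hΦ, eval₂Hom_C, eval₂Hom_X', Fin.val_last]
    rw [← RingHom.comp_apply Φ g, hg, hΦ (δ^[n] a)]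
    ring

end FrobeniusIterate

namespace IsPiDeriv

variable {O B : Type*} [CommRing O] [CommRing B] [Algebra O B] {π : O} {q : ℕ}
  {C : MvPolynomial (Fin 2) O} {δ : B → B}

theorem algebraMap_mul_aeval (hC : MvPolynomial.C π * C = X 0 ^ q + X 1 ^ q - (X 0 + X 1) ^ q)
    (x y : B) : algebraMap O B π * aeval ![x, y] C = x ^ q + y ^ q - (x + y) ^ q := by
  simpa using congrArg (aeval ![x, y]) hC

def frobenius (hC : MvPolynomial.C π * C = X 0 ^ q + X 1 ^ q - (X 0 + X 1) ^ q)
    (hδ : IsPiDeriv π q C δ) : B →+* B :=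
  RingHom.mk'
    { toFun x := x ^ q + algebraMap O B π * δ x
      map_one' := by simp [hδ.1]
      map_mul' x y := by simp only [hδ.2.2, mul_pow]; ring }
    (fun x y => by
      simp only [MonoidHom.coe_mk, OneHom.coe_mk, hδ.2.1]
      linear_combination algebraMap_mul_aeval hC x y)

end IsPiDeriv

theorem frobenius_iterate_eq_pi_pow_deriv_add_centered_general
    {O B : Type*} [CommRing O] [CommRing B] [Algebra O B]
    (π : O) (q : ℕ) (hq : 1 ≤ q)
    (C : MvPolynomial (Fin 2) O)
    (hC : MvPolynomial.C π * C = X 0 ^ q + X 1 ^ q - (X 0 + X 1) ^ q)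
    (δ : B → B) (hδ : IsPiDeriv π q C δ)
    (φ : B → B) (hφ : ∀ x : B, φ x = x ^ q + algebraMap O B π * δ x)
    (hfix : φ (algebraMap O B π) = algebraMap O B π)
    (m : ℕ) :
    ∃ P : MvPolynomial (Fin m) O, Centered P ∧
      ∀ a : B, φ^[m] a =
        algebraMap O B π ^ m * δ^[m] a +
          MvPolynomial.aeval (fun i : Fin m => δ^[(i : ℕ)] a) P := by
  obtain rfl : φ = hδ.frobenius hC := funext hφ
  let S : Subring O := ((hδ.frobenius hC).eqLocus (RingHom.id B)).comap (algebraMap O B)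
  let g : S →+* B := (algebraMap O B).comp S.subtype
  have hg : (hδ.frobenius hC).comp g = g := RingHom.ext fun s => s.2
  obtain ⟨P, hP, hPa⟩ := exists_centered_frobenius_iterate_eq (t := ⟨π, hfix⟩) (by omega) hg
    (fun x => rfl) m
  refine ⟨P.map S.subtype, hP.map S.subtype, fun a => ?_⟩
  rw [hPa, aeval_def, ← coe_eval₂Hom, eval₂Hom_map_hom]
  rfl

/-- `φ^m(a) = π^m·δ^m(a) + P(a, δ(a), …, δ^{m-1}(a))` for a centered polynomial
`P` over `O`. -/
theorem frobenius_iterate_eq_pi_pow_deriv_add_centered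
    {O B : Type*} [CommRing O] [CommRing B] [Algebra O B]
    (π : O) (hπ : π ∈ nonZeroDivisors O) (q : ℕ) (hq : 1 ≤ q)
    (C : MvPolynomial (Fin 2) O)
    (hC : MvPolynomial.C π * C = X 0 ^ q + X 1 ^ q - (X 0 + X 1) ^ q)
    (δ : B → B) (hδ : IsPiDeriv π q C δ)
    (φ : B → B) (hφ : ∀ x : B, φ x = x ^ q + algebraMap O B π * δ x)
    (hfix : φ (algebraMap O B π) = algebraMap O B π)
    (m : ℕ) (hm : 1 ≤ m) :
    ∃ P : MvPolynomial (Fin m) O, Centered P ∧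
      ∀ a : B, φ^[m] a =
        algebraMap O B π ^ m * δ^[m] a +
          MvPolynomial.aeval (fun i : Fin m => δ^[(i : ℕ)] a) P :=
  frobenius_iterate_eq_pi_pow_deriv_add_centered_general π q hq C hC δ hδ φ hφ hfix m
end

section
/- Let p be a prime, let B and C be commutative rings in which p is a non-zero-divisor, let δ be a p-derivation on B with associated Frobenius lift ψ (ψ(x) = x^p + p·δ(x)), let Δ be a p-derivation on C with associated Frobenius lift f (f(y) = y^p + p·Δ(y)), and let ι : B → C be a ring homomorphism such that f(ι(ψ^{m+1}(a))) = ι(ψ^{m+2}(a)) for all a ∈ B, where m ≥ 0 is a fixed integer. Let b ∈ B satisfy ι(δ^j(b)) = 0 for all 0 ≤ j ≤ m. Then for every n ≥ 1 there exists a centered polynomial H ∈ ℤ[T_1, …, T_n] such that Δ^n(ι(δ^{m+1}(b))) − ι(δ^{m+n+1}(b)) = H(ι(δ^{m+1}(b)), ι(δ^{m+2}(b)), …, ι(δ^{m+n}(b))). -/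
open MvPolynomial

/-!
Write `ψ^[n] x = pGhost p n (x, δ x, δ² x, …)`. Since `ι ∘ ψ^[m+1]` intertwines the Frobenius
lifts and `p` is a non-zero-divisor in `C'`, it intertwines `δ` and `Δ`; with `u = ι (δ^[m+1] b)`
and `v j = ι (δ^[j] b)` (so `v j = 0` for `j ≤ m`) this gives
`Δ^[k] (p^(m+1) * u) = pGhost p (m+1) (v k, …, v (k+m+1))` for all `k`, and these equations
determine `v` from `u`.

In `ℤ[X₀, X₁, …]` with the `p`-derivation `δ₀ Xᵢ = Xᵢ₊₁` the same equations, with `X₀` for `u`,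
have a solution `w`: each step divides by `p^(m+1)`, which is possible because `pGhost` turns
congruences mod `p` into congruences mod `p^(m+2)`. Moreover `w (m+1+k) ≡ X k` modulo polynomials
in `X₀, …, X_{k-1}`, so `X n - w (m+1+n)` is a polynomial `H` in `w (m+1), …, w (m+n)`, and `H`
is centered because all `w j` vanish at `0`. The specialization `Xᵢ ↦ Δ^[i] u` commutes with the
`p`-derivations, hence maps `w` to `v`, and carries this identity to the theorem.
-/

section Ghost

variable (p : ℕ) {A : Type*} [CommRing A]

/-- `pGhost p n (fun i => δ^[i] x) = ψ^[n] x` for the Frobenius lift `ψ` of a `p`-derivation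
`δ` (`iterate_eq_pGhost`). -/
def pGhost : ℕ → (ℕ → A) → A
  | 0, x => x 0
  | n + 1, x => pGhost n x ^ p + p * pGhost n (fun i => x (i + 1))

variable {p}

lemma pGhost_congr {n : ℕ} {x y : ℕ → A} (h : ∀ i ≤ n, x i = y i) :
    pGhost p n x = pGhost p n y := by
  induction n generalizing x y with
  | zero => exact h 0 le_rfl
  | succ n ih =>
    rw [pGhost, pGhost, ih fun i hi => h i (by omega), ih fun i hi => h (i + 1) (by omega)]

lemma map_pGhost {A' F : Type*} [CommRing A'] [FunLike F A A'] [RingHomClass F A A'] (φ : F)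
    (n : ℕ) (x : ℕ → A) : φ (pGhost p n x) = pGhost p n (fun i => φ (x i)) := by
  induction n generalizing x with
  | zero => rfl
  | succ n ih => simp only [pGhost, map_add, map_mul, map_pow, map_natCast, ih]

lemma pGhost_sub_congr {n : ℕ} {x y : ℕ → A} (h : ∀ i < n, x i = y i) :
    pGhost p n x - p ^ n * x n = pGhost p n y - p ^ n * y n := by
  induction n generalizing x y with
  | zero => simp [pGhost]
  | succ n ih =>
    have hlow : pGhost p n x = pGhost p n y := pGhost_congr fun i hi => h i (by omega)
    have hshift := ih (x := fun i => x (i + 1)) (y := fun i => y (i + 1)) fun i hi => h _ (by omega)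
    simp only [pGhost, hlow]
    linear_combination (p : A) * hshift

lemma pGhost_eq_of_eq_zero (hp : p ≠ 0) {n : ℕ} {x : ℕ → A} (h : ∀ i < n, x i = 0) :
    pGhost p n x = p ^ n * x n := by
  have h0 : ∀ n, pGhost p n (fun _ => (0 : A)) = 0 := by
    intro n
    induction n with
    | zero => rfl
    | succ n ih => simp [pGhost, ih, zero_pow hp]
  exact sub_eq_zero.mp (by simpa [h0] using pGhost_sub_congr (p := p) (y := fun _ => 0) h)

lemma pGhost_mem (S : Subring A) (n : ℕ) {x : ℕ → A} (h : ∀ i, x i ∈ S) : pGhost p n x ∈ S := by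
  induction n generalizing x with
  | zero => exact h 0
  | succ n ih =>
    exact S.add_mem (S.pow_mem (ih h) p) (S.mul_mem (natCast_mem S p) (ih fun i => h (i + 1)))

lemma pGhost_sub_mem (S : Subring A) {n : ℕ} {x : ℕ → A} (h : ∀ i < n, x i ∈ S) :
    pGhost p n x - p ^ n * x n ∈ S := by
  rw [pGhost_sub_congr (y := fun i => if i < n then x i else 0) fun i hi => (if_pos hi).symm]
  simpa using pGhost_mem S n fun i => by split_ifs with hi <;> simp [h, hi, S.zero_mem]

lemma pGhost_succ' (n : ℕ) (x : ℕ → A) :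
    pGhost p (n + 1) x = pGhost p n (fun i => x i ^ p + p * x (i + 1)) := by
  induction n generalizing x with
  | zero => rfl
  | succ n ih => rw [pGhost, ih, ih]; rfl

lemma pow_dvd_pow_sub_pow_of_pow_dvd_sub {a b : A} {k : ℕ} (h : (p : A) ^ (k + 1) ∣ a - b) :
    (p : A) ^ (k + 2) ∣ a ^ p - b ^ p := by
  rw [← geom_sum₂_mul, pow_succ' _ (k + 1)]
  refine mul_dvd_mul ?_ h
  -- the geometric sum is `≡ p * b ^ (p - 1)` modulo `a - b`, hence modulo `p`
  let π := Ideal.Quotient.mk (Ideal.span {(p : A)})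
  have hπ : ∀ r : A, (p : A) ∣ r ↔ π r = 0 := fun r => by
    rw [Ideal.Quotient.eq_zero_iff_mem, Ideal.mem_span_singleton]
  have hab : π a = π b := by
    rw [← sub_eq_zero, ← map_sub, ← hπ]
    exact (dvd_pow_self _ k.succ_ne_zero).trans h
  rw [hπ, RingHom.map_geom_sum₂, hab, geom_sum₂_self, ← map_natCast π, ← map_pow, ← map_mul, ← hπ]
  exact dvd_mul_right _ _

lemma pow_dvd_pGhost_sub_pGhost {x y : ℕ → A} (h : ∀ i, (p : A) ∣ x i - y i) (n : ℕ) :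
    (p : A) ^ (n + 1) ∣ pGhost p n x - pGhost p n y := by
  induction n generalizing x y with
  | zero => simpa [pGhost] using h 0
  | succ n ih =>
    have hsub : pGhost p (n + 1) x - pGhost p (n + 1) y = (pGhost p n x ^ p - pGhost p n y ^ p)
        + p * (pGhost p n (fun i => x (i + 1)) - pGhost p n (fun i => y (i + 1))) := by
      rw [pGhost, pGhost]; ring
    refine hsub ▸ dvd_add (pow_dvd_pow_sub_pow_of_pow_dvd_sub (ih h)) ?_
    rw [pow_succ' _ (n + 1)]
    exact mul_dvd_mul_left _ (ih fun i => h (i + 1))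

lemma eq_of_pGhost_eq (hp : (p : A) ∈ nonZeroDivisors A) {n N : ℕ} {x y : ℕ → A}
    (h₀ : ∀ j < n, x j = y j)
    (h : ∀ k < N, pGhost p n (fun i => x (k + i)) = pGhost p n (fun i => y (k + i))) :
    ∀ j < n + N, x j = y j := by
  induction N with
  | zero => simpa using h₀
  | succ N ih =>
    have ih := ih fun k hk => h k (by omega)
    intro j hj
    obtain hj | rfl : j < n + N ∨ j = N + n := by omega
    · exact ih j hj
    have hlow := pGhost_sub_congr (p := p) (n := n) (x := fun i => x (N + i))
      (y := fun i => y (N + i)) fun i hi => ih (N + i) (by omega)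
    rw [h N (by omega), sub_right_inj] at hlow
    exact (mul_cancel_left_mem_nonZeroDivisors (pow_mem hp n)).1 hlow

end Ghost

section FrobeniusLift

variable {p : ℕ} {A A' : Type*} [CommRing A] [CommRing A']

def IsPDeriv.frobenius {Cp : MvPolynomial (Fin 2) ℤ}
    (hCp : (p : MvPolynomial (Fin 2) ℤ) * Cp = X 0 ^ p + X 1 ^ p - (X 0 + X 1) ^ p)
    {δ : A → A} (hδ : IsPDeriv p Cp δ) : A →+* A :=
  RingHom.mk'
    { toFun x := x ^ p + p * δ x
      map_one' := by simp [hδ.1]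
      map_mul' x y := by simp only [hδ.2.2]; ring }
    fun x y => by
      have hC : (p : A) * aeval ![x, y] Cp = x ^ p + y ^ p - (x + y) ^ p := by
        simpa using congrArg (aeval (R := ℤ) ![x, y]) hCp
      simp only [MonoidHom.coe_mk, OneHom.coe_mk, hδ.2.1]
      linear_combination hC

variable {δ : A → A}

lemma iterate_eq_pGhost {φ : A →+* A} (hφ : ∀ x, φ x = x ^ p + p * δ x) (n : ℕ) (x : A) :
    φ^[n] x = pGhost p n (fun i => δ^[i] x) := by
  induction n generalizing x with
  | zero => rfl
  | succ n ih =>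
    rw [Function.iterate_succ_apply, hφ, ← RingHom.coe_pow, map_add, map_pow, map_mul,
      map_natCast, RingHom.coe_pow, ih, ih, pGhost]
    simp only [← Function.iterate_succ_apply δ]

lemma pow_dvd_delta_pGhost_sub {φ : A →+* A} (hφ : ∀ x, φ x = x ^ p + p * δ x)
    (hp : (p : A) ∈ nonZeroDivisors A) (n : ℕ) (x : ℕ → A) :
    (p : A) ^ n ∣ δ (pGhost p n x) - pGhost p n (fun i => x (i + 1)) := by
  -- `φ (x i) ≡ x i ^ p + p * x (i + 1)` mod `p`, so the two ghosts agree mod `p ^ (n + 1)`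
  have key : (p : A) * (δ (pGhost p n x) - pGhost p n (fun i => x (i + 1))) =
      pGhost p n (fun i => φ (x i)) - pGhost p n (fun i => x i ^ p + p * x (i + 1)) := by
    rw [← pGhost_succ', ← map_pGhost, hφ, pGhost]; ring
  obtain ⟨c, hc⟩ := pow_dvd_pGhost_sub_pGhost (p := p)
    (x := fun i => φ (x i)) (y := fun i => x i ^ p + p * x (i + 1))
    (fun i => ⟨δ (x i) - x (i + 1), by rw [hφ]; ring⟩) n
  refine ⟨c, (mul_cancel_left_mem_nonZeroDivisors hp).1 ?_⟩
  rw [key, hc]; ring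

lemma semiconj_delta_of_comm {φ : A → A} {φ' : A' → A'} {δ' : A' → A'}
    (hφ : ∀ x, φ x = x ^ p + p * δ x) (hφ' : ∀ y, φ' y = y ^ p + p * δ' y)
    (hp : (p : A') ∈ nonZeroDivisors A') (g : A →+* A') (hg : ∀ x, φ' (g x) = g (φ x)) :
    Function.Semiconj g δ δ' := fun x => by
  refine (mul_cancel_left_mem_nonZeroDivisors hp).1 ?_
  have := hg x
  rw [hφ, hφ', map_add, map_mul, map_pow, map_natCast] at this
  linear_combination -this

lemma iterate_delta_eq_pGhost_of_comm {B C : Type*} [CommRing B] [CommRing C]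
    {δ : B → B} {Ψ : B →+* B} (hΨ : ∀ x, Ψ x = x ^ p + p * δ x)
    {f Δ : C → C} (hf : ∀ y, f y = y ^ p + p * Δ y) (hpC : (p : C) ∈ nonZeroDivisors C)
    (ι : B →+* C) (m : ℕ) (hcomm : ∀ a, f (ι (Ψ^[m + 1] a)) = ι (Ψ^[m + 2] a)) (b : B) (k : ℕ) :
    Δ^[k] (ι (Ψ^[m + 1] b)) = pGhost p (m + 1) (fun i => ι (δ^[k + i] b)) := by
  have hsemi : Function.Semiconj (ι.comp (Ψ ^ (m + 1))) δ Δ :=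
    semiconj_delta_of_comm hΨ hf hpC _ fun a => by
      simpa [RingHom.coe_pow, Function.iterate_succ_apply] using hcomm a
  have h := (hsemi.iterate_right k b).symm
  simp only [RingHom.coe_comp, RingHom.coe_pow, Function.comp_apply] at h
  rw [h, iterate_eq_pGhost hΨ, map_pGhost]
  simp only [← Function.iterate_add_apply, Nat.add_comm k]

end FrobeniusLift

lemma X_sub_mem_range_aeval {R : Type*} [CommRing R] {w : ℕ → MvPolynomial ℕ R} {n : ℕ}
    (hw : ∀ k ≤ n, w k - X k ∈ supported R {i | i < k}) :
    X n - w n ∈ (aeval (R := R) fun i : Fin n => w i).range := by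
  set S := (aeval (R := R) fun i : Fin n => w i).range
  have key : ∀ k ≤ n, supported R {i | i < k} ≤ S := by
    intro k hk
    induction k with
    | zero => simp [supported_empty]
    | succ k ih =>
      rw [supported_eq_adjoin_X, Algebra.adjoin_le_iff]
      rintro _ ⟨i, hi : i < k + 1, rfl⟩
      obtain hi | rfl := Nat.lt_succ_iff_lt_or_eq.1 hi
      · exact ih (by omega) (supported_eq_adjoin_X (R := R) _ ▸
          Algebra.subset_adjoin (Set.mem_image_of_mem X hi))
      have hwk : w i ∈ S := (AlgHom.mem_range _).2 ⟨X ⟨i, by omega⟩, aeval_X _ _⟩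
      simpa using sub_mem hwk (ih (by omega) (hw i (by omega)))
  simpa using neg_mem (key n le_rfl (hw n le_rfl))

section FreeDelta

local notation "ℤX" => MvPolynomial ℕ ℤ

variable (p : ℕ)

noncomputable def freeFrobenius : ℤX →ₐ[ℤ] ℤX :=
  aeval fun i => X i ^ p + (p : ℤX) * X (i + 1)

lemma freeFrobenius_X (i : ℕ) :
    freeFrobenius p (X i) = X i ^ p + (p : ℤX) * X (i + 1) :=
  aeval_X _ _

lemma exists_freeDelta (hp : p.Prime) :
    ∃ δ₀ : ℤX → ℤX,
      ∀ z, freeFrobenius p z = z ^ p + (p : ℤX) * δ₀ z := by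
  have := Fact.mk hp
  -- modulo `p`, `freeFrobenius` becomes the Frobenius of `(ZMod p)[X₀, X₁, …]`
  have hmod : (map (Int.castRingHom (ZMod p))).comp (freeFrobenius p).toRingHom =
      (frobenius _ p).comp (map (Int.castRingHom (ZMod p))) := by
    refine ringHom_ext (fun a => ?_) (fun i => ?_)
    · simp [freeFrobenius]
    · simp [freeFrobenius, frobenius_def]
  choose δ₀ hδ₀ using fun z => (C_dvd_iff_zmod p (freeFrobenius p z - z ^ p)).2 <| by
    simpa [sub_eq_zero, frobenius_def] using RingHom.congr_fun hmod z
  exact ⟨δ₀, fun z => by rw [← sub_eq_iff_eq_add', hδ₀]; simp⟩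

lemma freeFrobenius_mem_supported {k : ℕ} {z : ℤX}
    (hz : z ∈ supported ℤ {i | i < k}) : freeFrobenius p z ∈ supported ℤ {i | i < k + 1} := by
  suffices (supported ℤ {i | i < k}).map (freeFrobenius p) ≤ supported ℤ {i | i < k + 1} from
    this ⟨z, hz, rfl⟩
  rw [supported_eq_adjoin_X, AlgHom.map_adjoin, Algebra.adjoin_le_iff]
  rintro _ ⟨_, ⟨i, hi, rfl⟩, rfl⟩
  rw [freeFrobenius_X]
  exact add_mem (pow_mem (X_mem_supported.2 (by simp at hi ⊢; omega)) _)
    (mul_mem (natCast_mem _ _) (X_mem_supported.2 (by simp at hi ⊢; omega)))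

variable {p}

lemma mem_supported_of_pow_mul_mem (hp : p ≠ 0) {e : ℕ} {s : Set ℕ} {z : ℤX}
    (h : (p : ℤX) ^ e * z ∈ supported ℤ s) : z ∈ supported ℤ s := by
  rwa [← map_natCast C, ← map_pow, mem_supported,
    vars_C_mul _ (pow_ne_zero _ (by exact_mod_cast hp)), ← mem_supported] at h

variable {δ₀ : ℤX → ℤX} {m N : ℕ} {w : ℕ → ℤX}

lemma iterate_freeDelta_sub_mem_supported
    (hδ₀ : ∀ z, freeFrobenius p z = z ^ p + (p : ℤX) * δ₀ z) (hp : p ≠ 0) (e k : ℕ) :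
    δ₀^[k] ((p : ℤX) ^ e * X 0) - (p : ℤX) ^ e * X k ∈ supported ℤ {i | i < k} := by
  induction k with
  | zero => simp
  | succ k ih =>
    obtain ⟨s, hs, hz⟩ : ∃ s ∈ supported ℤ {i | i < k},
        δ₀^[k] ((p : ℤX) ^ e * X 0) = (p : ℤX) ^ e * X k + s := ⟨_, ih, by ring⟩
    have key := hδ₀ ((p : ℤX) ^ e * X k + s)
    rw [map_add, map_mul, map_pow, map_natCast, freeFrobenius_X] at key
    refine mem_supported_of_pow_mul_mem hp (e := 1) ?_
    rw [Function.iterate_succ_apply', hz, pow_one, show (p : ℤX) * (δ₀ _ - _) =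
        (p : ℤX) ^ e * X k ^ p + freeFrobenius p s - ((p : ℤX) ^ e * X k + s) ^ p by
      linear_combination -key]
    have hXk : X k ∈ supported ℤ {i | i < k + 1} := X_mem_supported.2 (Nat.lt_succ_self k)
    have hs' : s ∈ supported ℤ {i | i < k + 1} :=
      supported_mono (fun i (hi : i < k) => Nat.lt_succ_of_lt hi) hs
    exact sub_mem (add_mem (mul_mem (pow_mem (natCast_mem _ _) _) (pow_mem hXk _))
      (freeFrobenius_mem_supported p hs))
      (pow_mem (add_mem (mul_mem (pow_mem (natCast_mem _ _) _) hXk) hs') _)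

lemma eval_zero_iterate_freeDelta
    (hδ₀ : ∀ z, freeFrobenius p z = z ^ p + (p : ℤX) * δ₀ z) (hp : p ≠ 0) {z : ℤX}
    (hz : eval (fun _ => 0) z = 0) (k : ℕ) : eval (fun _ => 0) (δ₀^[k] z) = 0 := by
  have hfrob (y : ℤX) : eval (fun _ => 0) (freeFrobenius p y) = eval (fun _ => 0) y := by
    have h : (aeval fun _ => (0 : ℤ)).comp (freeFrobenius p) = aeval fun _ => 0 :=
      algHom_ext fun i => by simp [freeFrobenius, zero_pow hp]
    simpa using AlgHom.congr_fun h y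
  induction k with
  | zero => exact hz
  | succ k ih =>
    have key := congrArg (eval fun _ => (0 : ℤ)) (hδ₀ (δ₀^[k] z))
    rw [hfrob, map_add, map_mul, map_pow, map_natCast, ih, zero_pow hp, zero_add,
      zero_eq_mul] at key
    rw [Function.iterate_succ_apply']
    exact key.resolve_left (by exact_mod_cast hp)

lemma exists_pGhost_eq_iterate_freeDelta
    (hδ₀ : ∀ z, freeFrobenius p z = z ^ p + (p : ℤX) * δ₀ z) (hp : p ≠ 0) (m N : ℕ) :
    ∃ w : ℕ → ℤX, (∀ j ≤ m, w j = 0) ∧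
      ∀ k < N, pGhost p (m + 1) (fun i => w (k + i)) = δ₀^[k] ((p : ℤX) ^ (m + 1) * X 0) := by
  induction N with
  | zero => exact ⟨fun _ => 0, fun _ _ => rfl, fun _ h => absurd h (Nat.not_lt_zero _)⟩
  | succ N ih =>
    obtain ⟨w, hw0, hw⟩ := ih
    obtain ⟨t, ht⟩ : (p : ℤX) ^ (m + 1) ∣
        δ₀^[N] ((p : ℤX) ^ (m + 1) * X 0) - pGhost p (m + 1) (fun i => w (N + i)) := by
      cases N with
      | zero =>
        rw [pGhost_eq_of_eq_zero hp fun i hi => hw0 _ (by omega)]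
        exact ⟨X 0 - w (0 + (m + 1)), by simp; ring⟩
      | succ N =>
        rw [Function.iterate_succ_apply', ← hw N (Nat.lt_succ_self N)]
        have h := pow_dvd_delta_pGhost_sub (φ := (freeFrobenius p).toRingHom) hδ₀
          (mem_nonZeroDivisors_of_ne_zero (by exact_mod_cast hp)) (m + 1) (fun i => w (N + i))
        rwa [pGhost_congr (x := fun i => w (N + (i + 1))) (y := fun i => w (N + 1 + i))
          fun i _ => congrArg w (by omega)] at h
    refine ⟨Function.update w (N + (m + 1)) (w (N + (m + 1)) + t),
      fun j hj => by rw [Function.update_of_ne (by omega)]; exact hw0 j hj, fun k hk => ?_⟩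
    obtain hk | rfl : k < N ∨ k = N := by omega
    · rw [← hw k hk]
      exact pGhost_congr fun i hi => Function.update_of_ne (by omega) _ _
    · have htop := pGhost_sub_congr (p := p) (n := m + 1) (y := fun i => w (k + i))
        (x := fun i => Function.update w (k + (m + 1)) (w (k + (m + 1)) + t) (k + i))
        fun i hi => Function.update_of_ne (by omega) _ _
      simp only [Function.update_self] at htop
      linear_combination htop - ht

lemma sub_X_mem_supported_of_pGhost_eq
    (hδ₀ : ∀ z, freeFrobenius p z = z ^ p + (p : ℤX) * δ₀ z) (hp : p ≠ 0)
    (hw0 : ∀ j ≤ m, w j = 0)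
    (hw : ∀ k < N, pGhost p (m + 1) (fun i => w (k + i)) = δ₀^[k] ((p : ℤX) ^ (m + 1) * X 0)) :
    ∀ k < N, w (m + 1 + k) - X k ∈ supported ℤ {i | i < k} := by
  intro k
  induction k using Nat.strong_induction_on with
  | _ k ih =>
  intro hk
  have hwin : ∀ i < m + 1, w (k + i) ∈ (supported ℤ {i | i < k}).toSubring := by
    intro i hi
    by_cases hki : k + i ≤ m
    · rw [hw0 _ hki]; exact zero_mem _
    obtain ⟨k', hk'⟩ : ∃ k', k + i = m + 1 + k' := ⟨k + i - (m + 1), by omega⟩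
    have hlt : k' < k := by omega
    rw [hk', ← sub_add_cancel (w (m + 1 + k')) (X k')]
    exact add_mem (supported_mono (fun j (hj : j < k') => hj.trans hlt) (ih k' hlt (by omega)))
      (X_mem_supported.2 hlt)
  refine mem_supported_of_pow_mul_mem hp (e := m + 1) ?_
  rw [show (p : ℤX) ^ (m + 1) * (w (m + 1 + k) - X k) =
      (δ₀^[k] ((p : ℤX) ^ (m + 1) * X 0) - (p : ℤX) ^ (m + 1) * X k) -
        (pGhost p (m + 1) (fun i => w (k + i)) - (p : ℤX) ^ (m + 1) * w (k + (m + 1))) by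
    rw [← hw k hk, Nat.add_comm k]; ring]
  exact sub_mem (iterate_freeDelta_sub_mem_supported hδ₀ hp _ k) (pGhost_sub_mem _ hwin)

lemma eval_zero_of_pGhost_eq
    (hδ₀ : ∀ z, freeFrobenius p z = z ^ p + (p : ℤX) * δ₀ z) (hp : p ≠ 0)
    (hw0 : ∀ j ≤ m, w j = 0)
    (hw : ∀ k < N, pGhost p (m + 1) (fun i => w (k + i)) = δ₀^[k] ((p : ℤX) ^ (m + 1) * X 0)) :
    ∀ j < m + 1 + N, eval (fun _ => 0) (w j) = 0 :=
  eq_of_pGhost_eq (x := fun j => eval (fun _ => 0) (w j)) (y := fun _ => 0)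
    (mem_nonZeroDivisors_of_ne_zero (by exact_mod_cast hp))
    (fun j hj => by simp [hw0 j (by omega)]) fun k hk => by
      rw [← map_pGhost, hw k hk, eval_zero_iterate_freeDelta hδ₀ hp (by simp) k,
        pGhost_eq_of_eq_zero hp fun _ _ => rfl, mul_zero]

lemma exists_centered_of_pGhost_eq {n : ℕ}
    (hδ₀ : ∀ z, freeFrobenius p z = z ^ p + (p : ℤX) * δ₀ z) (hp : p ≠ 0)
    (hw0 : ∀ j ≤ m, w j = 0)
    (hw : ∀ k < n + 1, pGhost p (m + 1) (fun i => w (k + i)) =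
      δ₀^[k] ((p : ℤX) ^ (m + 1) * X 0)) :
    ∃ H : MvPolynomial (Fin n) ℤ, Centered H ∧
      X n - w (m + 1 + n) = aeval (fun i : Fin n => w (m + 1 + i)) H := by
  have hsub := sub_X_mem_supported_of_pGhost_eq hδ₀ hp hw0 hw
  have heval := eval_zero_of_pGhost_eq hδ₀ hp hw0 hw
  obtain ⟨H, hH : aeval _ H = _⟩ := X_sub_mem_range_aeval (w := fun k => w (m + 1 + k)) (n := n)
    fun k hk => hsub k (by omega)
  refine ⟨H, ?_, hH.symm⟩
  have hfam : (fun i : Fin n => aeval (fun _ => (0 : ℤ)) (w (m + 1 + i))) = fun _ => 0 :=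
    funext fun i => heval _ (by omega)
  change aeval (fun _ => (0 : ℤ)) H = 0
  rw [← hfam, ← comp_aeval_apply, hH, map_sub, aeval_X]
  exact sub_eq_zero.2 (heval _ (by omega)).symm

lemma semiconj_aeval_iterate {C : Type*} [CommRing C]
    (hδ₀ : ∀ z, freeFrobenius p z = z ^ p + (p : ℤX) * δ₀ z) (hpC : (p : C) ∈ nonZeroDivisors C)
    {F : C →+* C} {Δ : C → C} (hF : ∀ y, F y = y ^ p + p * Δ y) (u : C) :
    Function.Semiconj (aeval fun i => Δ^[i] u : ℤX →ₐ[ℤ] C) δ₀ Δ := by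
  refine semiconj_delta_of_comm hδ₀ hF hpC (aeval fun i => Δ^[i] u : ℤX →ₐ[ℤ] C).toRingHom
    fun z => ?_
  have hcomp : F.toIntAlgHom.comp (aeval fun i => Δ^[i] u) =
      (aeval fun i => Δ^[i] u).comp (freeFrobenius p) :=
    algHom_ext fun i => by
      rw [AlgHom.comp_apply, AlgHom.comp_apply, freeFrobenius_X]
      simp [hF, Function.iterate_succ_apply']
  exact AlgHom.congr_fun hcomp z

end FreeDelta

theorem iterate_Delta_sub_iterate_delta_centered_general
    (p : ℕ) (hp : p.Prime) {B C' : Type*} [CommRing B] [CommRing C']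
    (hpC : (p : C') ∈ nonZeroDivisors C')
    (Cp : MvPolynomial (Fin 2) ℤ)
    (hCp : (p : MvPolynomial (Fin 2) ℤ) * Cp =
      X 0 ^ p + X 1 ^ p - (X 0 + X 1) ^ p)
    (δ : B → B) (hδ : IsPDeriv p Cp δ)
    (ψ : B → B) (hψ : ∀ x : B, ψ x = x ^ p + (p : B) * δ x)
    (Δ : C' → C') (hΔ : IsPDeriv p Cp Δ)
    (f : C' → C') (hf : ∀ y : C', f y = y ^ p + (p : C') * Δ y)
    (ι : B →+* C') (m : ℕ)
    (hcomm : ∀ a : B, f (ι (ψ^[m + 1] a)) = ι (ψ^[m + 2] a))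
    (b : B) (hb : ∀ j ≤ m, ι (δ^[j] b) = 0) :
    ∀ n, 1 ≤ n → ∃ H : MvPolynomial (Fin n) ℤ, Centered H ∧
      Δ^[n] (ι (δ^[m + 1] b)) - ι (δ^[m + n + 1] b) =
        MvPolynomial.aeval (fun i : Fin n => ι (δ^[m + 1 + (i : ℕ)] b)) H := by
  intro n _
  obtain rfl : ψ = hδ.frobenius hCp := funext hψ
  obtain rfl : f = hΔ.frobenius hCp := funext hf
  obtain ⟨δ₀, hδ₀⟩ := exists_freeDelta p hp
  obtain ⟨w, hw0, hw⟩ := exists_pGhost_eq_iterate_freeDelta hδ₀ hp.ne_zero m (n + 1)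
  obtain ⟨H, hHc, hH⟩ := exists_centered_of_pGhost_eq hδ₀ hp.ne_zero hw0 hw
  let θ : MvPolynomial ℕ ℤ →ₐ[ℤ] C' := aeval fun i => Δ^[i] (ι (δ^[m + 1] b))
  have hθ : Function.Semiconj θ δ₀ Δ := semiconj_aeval_iterate hδ₀ hpC hf _
  have hstart : θ ((p : MvPolynomial ℕ ℤ) ^ (m + 1) * X 0) = ι ((hδ.frobenius hCp)^[m + 1] b) := by
    rw [iterate_eq_pGhost (fun _ => rfl), map_pGhost,
      pGhost_eq_of_eq_zero hp.ne_zero fun i hi => hb i (by omega)]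
    simp [θ]
  have hghost := iterate_delta_eq_pGhost_of_comm (fun _ => rfl) hf hpC ι m hcomm b
  have hθw : ∀ j < m + 1 + (n + 1), θ (w j) = ι (δ^[j] b) := by
    refine eq_of_pGhost_eq hpC (fun j hj => ?_) fun k hk => ?_
    · rw [hw0 j (by omega), map_zero, hb j (by omega)]
    · rw [← map_pGhost, hw k hk, hθ.iterate_right k, hstart, hghost k]
  refine ⟨H, hHc, ?_⟩
  have hfam : (fun i : Fin n => θ (w (m + 1 + i))) = fun i : Fin n => ι (δ^[m + 1 + i] b) :=
    funext fun i => hθw _ (by omega)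
  have h := congrArg θ hH
  rw [Nat.add_right_comm m n 1]
  rwa [map_sub, aeval_X, comp_aeval_apply, hfam, hθw _ (by omega)] at h

/-- `Δ^n(ι(δ^{m+1}(b))) - ι(δ^{m+n+1}(b))` is a centered polynomial in
`ι(δ^{m+1}(b)), …, ι(δ^{m+n}(b))`. -/
theorem iterate_Delta_sub_iterate_delta_centered
    (p : ℕ) (hp : p.Prime) {B C' : Type*} [CommRing B] [CommRing C']
    (hpB : (p : B) ∈ nonZeroDivisors B) (hpC : (p : C') ∈ nonZeroDivisors C')
    (Cp : MvPolynomial (Fin 2) ℤ)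
    (hCp : (p : MvPolynomial (Fin 2) ℤ) * Cp =
      X 0 ^ p + X 1 ^ p - (X 0 + X 1) ^ p)
    (δ : B → B) (hδ : IsPDeriv p Cp δ)
    (ψ : B → B) (hψ : ∀ x : B, ψ x = x ^ p + (p : B) * δ x)
    (Δ : C' → C') (hΔ : IsPDeriv p Cp Δ)
    (f : C' → C') (hf : ∀ y : C', f y = y ^ p + (p : C') * Δ y)
    (ι : B →+* C') (m : ℕ)
    (hcomm : ∀ a : B, f (ι (ψ^[m + 1] a)) = ι (ψ^[m + 2] a))
    (b : B) (hb : ∀ j ≤ m, ι (δ^[j] b) = 0) :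
    ∀ n, 1 ≤ n → ∃ H : MvPolynomial (Fin n) ℤ, Centered H ∧
      Δ^[n] (ι (δ^[m + 1] b)) - ι (δ^[m + n + 1] b) =
        MvPolynomial.aeval (fun i : Fin n => ι (δ^[m + 1 + (i : ℕ)] b)) H :=
  iterate_Delta_sub_iterate_delta_centered_general p hp hpC Cp hCp δ hδ ψ hψ Δ hΔ f hf ι m hcomm b
    hb
end
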